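/- arXiv:2501.15457 — 6 statements merged into one kernel-verified Lean document; each statement's English description precedes it below -/
import Mathlib

section
/- Let r ≥ 1 and R ≥ 1 be integers and let δ be a real number satisfying 18R²/r ≤ δ ≤ R. Set k := ⌈R·r/(R+δ)⌉ + R. Then k ≤ r−1, r/(k−R) ≤ 1 + δ/R, and r/(r−k) ≤ 3R/δ. -/
/-- Let `r, R ≥ 1` be integers and `δ` a real with `18R²/r ≤ δ ≤ R`.
Set `k := ⌈R·r/(R+δ)⌉ + R`. Then `k ≤ r−1`, `r/(k−R) ≤ 1 + δ/R`,
and `r/(r−k) ≤ 3R/δ`. -/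
theorem ceil_k_inequalities (r R : ℕ) (δ : ℝ) (hr : 1 ≤ r) (hR : 1 ≤ R)
    (hδ1 : 18 * (R : ℝ) ^ 2 / r ≤ δ) (hδ2 : δ ≤ R)
    (k : ℤ) (hk : k = ⌈((R : ℝ) * r) / ((R : ℝ) + δ)⌉ + R) :
    k ≤ (r : ℤ) - 1 ∧
    (r : ℝ) / ((k : ℝ) - R) ≤ 1 + δ / R ∧
    (r : ℝ) / ((r : ℝ) - (k : ℝ)) ≤ 3 * R / δ := by
  have hR1 : (1:ℝ) ≤ (R:ℝ) := by exact_mod_cast hR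
  have hr1 : (1:ℝ) ≤ (r:ℝ) := by exact_mod_cast hr
  have hRpos : (0:ℝ) < R := by linarith
  have hrpos : (0:ℝ) < r := by linarith
  have hδpos : 0 < δ := lt_of_lt_of_le (by positivity) hδ1
  have hRδ : (0:ℝ) < (R:ℝ) + δ := by linarith
  have hrδ : 18 * (R:ℝ)^2 ≤ r * δ := by
    rw [div_le_iff₀ hrpos] at hδ1; linarith
  set x : ℝ := ((R : ℝ) * r) / ((R : ℝ) + δ) with hxdef
  have hx : x * ((R:ℝ) + δ) = (R:ℝ) * r := div_mul_cancel₀ _ (ne_of_gt hRδ)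
  have hle : x ≤ (⌈x⌉ : ℝ) := Int.le_ceil x
  have hlt : (⌈x⌉ : ℝ) < x + 1 := Int.ceil_lt_add_one x
  -- Part 1
  have h1 : ⌈x⌉ ≤ (r : ℤ) - R - 1 := by
    apply Int.ceil_le.mpr
    push_cast
    rw [hxdef, div_le_iff₀ hRδ]
    nlinarith
  have part1 : k ≤ (r : ℤ) - 1 := by omega
  have hkR : (k : ℝ) = (⌈x⌉ : ℝ) + R := by exact_mod_cast hk
  have h1' : (⌈x⌉ : ℝ) ≤ (r:ℝ) - R - 1 := by exact_mod_cast h1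
  -- Part 2
  have hxpos : 0 < x := by positivity
  have hcpos : 0 < (k : ℝ) - R := by rw [hkR]; linarith
  have part2 : (r : ℝ) / ((k : ℝ) - R) ≤ 1 + δ / R := by
    have h2 : (r : ℝ) / ((k : ℝ) - R) ≤ ((R:ℝ) + δ) / R := by
      rw [div_le_div_iff₀ hcpos hRpos]
      have hxc : x ≤ (k:ℝ) - R := by rw [hkR]; linarith
      nlinarith [mul_le_mul_of_nonneg_right hxc (le_of_lt hRδ)]
    have : ((R:ℝ) + δ) / R = 1 + δ / R := by field_simp
    linarith [h2, this ▸ h2]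
  -- Part 3
  have hrk : (1:ℝ) ≤ (r:ℝ) - k := by rw [hkR]; linarith
  have hrkpos : (0:ℝ) < (r:ℝ) - k := by linarith
  have part3 : (r : ℝ) / ((r : ℝ) - (k : ℝ)) ≤ 3 * R / δ := by
    rw [div_le_div_iff₀ hrkpos hδpos]
    have hlt' : (r:ℝ) - R - x - 1 < (r:ℝ) - k := by rw [hkR]; linarith
    nlinarith [mul_lt_mul_of_pos_right hlt' hRδ, hrδ, hδ2, hR1, hr1, hx,
      mul_pos hRpos hδpos]
  exact ⟨part1, part2, part3⟩
end

section
/- Let n ≥ s > r ≥ 1 and ℓ ≥ 1 be integers, let Δ := Σ_{i=r}^{s} C(s,i)·C(n−s, s−i), and let p := ℓ·(1 − 1/ℓ)^{C(s,r)}. If e·p·Δ < 1, then there exists a coloring c : C([n], r) → {1,…,ℓ} of all r-element subsets of [n] = {1,…,n} with ℓ colors such that every s-element subset A of [n] contains, among its r-element subsets, at least one set of each of the ℓ colors; in particular, each color class is a Turán (n,s,r)-system. -/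
open Finset

/-- `H` is an `r`-uniform hypergraph on the vertex type `V` in which every set of `s`
vertices contains at least one edge, i.e. a Turán `(|V|, s, r)`-system. -/
def IsTuranSystem {V : Type*} (s r : ℕ) (H : Finset (Finset V)) : Prop :=
  (∀ e ∈ H, e.card = r) ∧ ∀ A : Finset V, A.card = s → ∃ e ∈ H, e ⊆ A

/-- `T(n,s,r)`: the minimum size (number of edges) of a Turán `(n,s,r)`-system
(equal to `0` when `n < s`). -/
noncomputable def turanNum (n s r : ℕ) : ℕ :=
  sInf {m | ∃ H : Finset (Finset (Fin n)), IsTuranSystem s r H ∧ H.card = m}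

/-- `t(s,r) = lim_{n→∞} T(n,s,r)/C(n,r) = inf_{n ≥ s} T(n,s,r)/C(n,r)`. -/
noncomputable def turanDensity (s r : ℕ) : ℝ :=
  sInf {x : ℝ | ∃ n : ℕ, s ≤ n ∧ x = (turanNum n s r : ℝ) / (n.choose r : ℝ)}

/-- `μ(s,r) = t(s,r) · C(s,r)`. -/
noncomputable def mu (s r : ℕ) : ℝ :=
  turanDensity s r * ((s.choose r : ℕ) : ℝ)


section CountSplit
variable {α β : Type*} [Fintype α] [DecidableEq α] [Fintype β] [Nonempty β]

open Classical in
lemma count_split (E : Finset α) (P Q : (α → β) → Prop)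
    (hP : ∀ c c' : α → β, (∀ a ∈ E, c a = c' a) → P c → P c')
    (hQ : ∀ c c' : α → β, (∀ a ∉ E, c a = c' a) → Q c → Q c') :
    (univ.filter fun c => P c ∧ Q c).card * Fintype.card (α → β) =
      (univ.filter P).card * (univ.filter Q).card := by
  classical
  set e := Equiv.piEquivPiSubtypeProd (· ∈ E) (fun _ : α => β) with he
  obtain ⟨b₀⟩ := ‹Nonempty β›
  set P1 : ({a : α // a ∈ E} → β) → Prop := fun x => P (e.symm (x, fun _ => b₀)) with hP1
  set Q1 : ({a : α // ¬ a ∈ E} → β) → Prop := fun y => Q (e.symm (fun _ => b₀, y)) with hQ1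
  have key1 : ∀ c : α → β, P c ↔ P1 (e c).1 := by
    intro c
    have hagree : ∀ a ∈ E, c a = (e.symm ((e c).1, fun _ => b₀)) a := by
      intro a ha
      simp [he, Equiv.piEquivPiSubtypeProd, ha]
    constructor
    · intro h; exact hP _ _ hagree h
    · intro h; exact hP _ _ (fun a ha => (hagree a ha).symm) h
  have key2 : ∀ c : α → β, Q c ↔ Q1 (e c).2 := by
    intro c
    have hagree : ∀ a ∉ E, c a = (e.symm (fun _ => b₀, (e c).2)) a := by
      intro a ha
      simp [he, Equiv.piEquivPiSubtypeProd, ha]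
    constructor
    · intro h; exact hQ _ _ hagree h
    · intro h; exact hQ _ _ (fun a ha => (hagree a ha).symm) h
  have c1 : (univ.filter fun c => P c ∧ Q c).card
      = ((univ.filter P1) ×ˢ (univ.filter Q1)).card := by
    apply Finset.card_equiv e
    intro c
    simp [key1 c, key2 c, Finset.mem_product]
  have c2 : (univ.filter P).card = ((univ.filter P1) ×ˢ (univ : Finset ({a : α // ¬ a ∈ E} → β))).card := by
    apply Finset.card_equiv e
    intro c
    simp [key1 c, Finset.mem_product]
  have c3 : (univ.filter Q).card = ((univ : Finset ({a : α // a ∈ E} → β)) ×ˢ (univ.filter Q1)).card := by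
    apply Finset.card_equiv e
    intro c
    simp [key2 c, Finset.mem_product]
  have c4 : Fintype.card (α → β)
      = Fintype.card ({a : α // a ∈ E} → β) * Fintype.card ({a : α // ¬ a ∈ E} → β) := by
    rw [← Fintype.card_prod]
    exact Fintype.card_congr e
  rw [c1, c2, c3, c4, Finset.card_product, Finset.card_product, Finset.card_product]
  simp [Finset.card_univ]
  ring
end CountSplit


variable {α β : Type*} [Fintype α] [DecidableEq α] [Fintype β] [DecidableEq β]

lemma card_avoid (E : Finset α) (b : β) :
    (univ.filter fun c : α → β => ∀ a ∈ E, c a ≠ b).card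
      = (Fintype.card β - 1) ^ E.card * Fintype.card β ^ (Fintype.card α - E.card) := by
  classical
  have : (univ.filter fun c : α → β => ∀ a ∈ E, c a ≠ b)
      = Fintype.piFinset (fun a : α => if a ∈ E then (univ : Finset β).erase b else univ) := by
    ext c
    simp only [Finset.mem_filter, Finset.mem_univ, true_and, Fintype.mem_piFinset]
    constructor
    · intro h a
      by_cases ha : a ∈ E <;> simp [ha, h a]
    · intro h a ha
      have := h a
      simp [ha] at this
      exact this
  rw [this, Fintype.card_piFinset]
  rw [← Finset.prod_mul_prod_compl E]
  have h1 : ∏ a ∈ E, (if a ∈ E then (univ : Finset β).erase b else univ).card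
      = (Fintype.card β - 1) ^ E.card := by
    rw [Finset.prod_congr rfl (fun a ha => show _ = Fintype.card β - 1 by
      simp [ha, Finset.card_erase_of_mem, Finset.card_univ])]
    simp [Finset.prod_const]
  have h2 : ∏ a ∈ Eᶜ, (if a ∈ E then (univ : Finset β).erase b else univ).card
      = Fintype.card β ^ (Fintype.card α - E.card) := by
    rw [Finset.prod_congr rfl (fun a ha => show _ = Fintype.card β by
      simp [Finset.mem_compl.mp ha, Finset.card_univ])]
    simp [Finset.prod_const, Finset.card_compl]
  rw [h1, h2]


section LLL
variable {Ω ι : Type*} [Fintype Ω] [DecidableEq ι]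

open Classical in
noncomputable def fCnt (A : ι → Finset Ω) (S : Finset ι) : ℕ :=
  (univ.filter (fun ω => ∀ j ∈ S, ω ∉ A j)).card

open Classical in
noncomputable def gCnt (A : ι → Finset Ω) (i : ι) (S : Finset ι) : ℕ :=
  (univ.filter (fun ω => ω ∈ A i ∧ ∀ j ∈ S, ω ∉ A j)).card

lemma fCnt_insert (A : ι → Finset Ω) (i : ι) (S : Finset ι) :
    fCnt A (insert i S) + gCnt A i S = fCnt A S := by
  classical
  unfold fCnt gCnt
  rw [← Finset.card_union_of_disjoint]
  · congr 1
    ext ω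
    simp only [Finset.mem_union, Finset.mem_filter, Finset.mem_univ, true_and,
      Finset.mem_insert]
    constructor
    · rintro (h | ⟨h1, h2⟩)
      · intro j hj; exact h j (Or.inr hj)
      · exact h2
    · intro h
      by_cases hi : ω ∈ A i
      · exact Or.inr ⟨hi, h⟩
      · exact Or.inl (fun j hj => hj.elim (fun e => e ▸ hi) (h j))
  · rw [Finset.disjoint_left]
    intro ω h1 h2
    simp only [Finset.mem_filter, Finset.mem_univ, true_and] at h1 h2
    exact h1 i (Finset.mem_insert_self i S) h2.1

lemma fCnt_mono (A : ι → Finset Ω) {S S' : Finset ι} (h : S ⊆ S') :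
    fCnt A S' ≤ fCnt A S := by
  classical
  apply Finset.card_le_card
  intro ω hω
  simp only [fCnt, Finset.mem_filter, Finset.mem_univ, true_and] at hω ⊢
  exact fun j hj => hω j (h hj)

lemma gCnt_mono (A : ι → Finset Ω) (i : ι) {S S' : Finset ι} (h : S ⊆ S') :
    gCnt A i S' ≤ gCnt A i S := by
  classical
  apply Finset.card_le_card
  intro ω hω
  simp only [gCnt, Finset.mem_filter, Finset.mem_univ, true_and] at hω ⊢
  exact ⟨hω.1, fun j hj => hω.2 j (h hj)⟩

lemma fCnt_empty (A : ι → Finset Ω) : fCnt A ∅ = Fintype.card Ω := by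
  classical
  simp [fCnt, Finset.card_univ]

/-- `(d/(d+1))^d ≥ e⁻¹`. -/
lemma ratio_pow_ge (d : ℕ) : Real.exp (-1) ≤ ((d : ℝ) / (d + 1)) ^ d := by
  rcases Nat.eq_zero_or_pos d with hd | hd
  · simp [hd]
  · have hd0 : (0 : ℝ) < d := by exact_mod_cast hd
    have h1 : Real.exp (-(1 / (d : ℝ))) ≤ (d : ℝ) / (d + 1) := by
      rw [Real.exp_neg]
      rw [inv_le_comm₀ (Real.exp_pos _) (by positivity)]
      have h := Real.add_one_le_exp (1 / (d : ℝ))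
      have heq : ((d : ℝ) / (d + 1))⁻¹ = 1 / d + 1 := by
        rw [inv_div]
        field_simp
        ring
      rw [heq]
      exact h
    have h2 : Real.exp (-(1 / (d : ℝ))) ^ d = Real.exp (-1) := by
      rw [← Real.exp_nat_mul]
      congr 1
      field_simp
    calc Real.exp (-1) = Real.exp (-(1 / (d : ℝ))) ^ d := h2.symm
      _ ≤ ((d : ℝ) / (d + 1)) ^ d :=
          pow_le_pow_left₀ (Real.exp_pos _).le h1 d

variable [Nonempty Ω]

open Classical in
lemma lll_aux (A : ι → Finset Ω) (I : Finset ι) (Γ : ι → Finset ι)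
    (d : ℕ) (p : ℝ) (hp0 : 0 ≤ p)
    (hself : ∀ i ∈ I, i ∈ Γ i)
    (hdeg : ∀ i ∈ I, (Γ i ∩ I).card ≤ d + 1)
    (hind : ∀ i ∈ I, ∀ T ⊆ I, i ∉ T → Disjoint T (Γ i) →
      (gCnt A i T : ℝ) ≤ p * fCnt A T)
    (hep : Real.exp 1 * p * (d + 1) < 1) :
    ∀ k : ℕ, ∀ S ⊆ I, S.card ≤ k →
      0 < fCnt A S ∧ ∀ i ∈ I, i ∉ S →
        (gCnt A i S : ℝ) ≤ (Real.exp 1 * p) * fCnt A S := by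
  set y := Real.exp 1 * p with hy
  have he1 : (1 : ℝ) ≤ Real.exp 1 := by
    have := Real.add_one_le_exp (1 : ℝ); linarith
  have hy0 : 0 ≤ y := by positivity
  have hpy : p ≤ y := by nlinarith
  have hyx : y * (d + 1) < 1 := by
    calc y * (d + 1) = Real.exp 1 * p * (d + 1) := by rw [hy]
      _ < 1 := hep
  have hd1 : (1 : ℝ) ≤ (d : ℝ) + 1 := by
    have : (0:ℝ) ≤ (d:ℝ) := Nat.cast_nonneg d
    linarith
  have hy1 : y < 1 := by nlinarith
  have hpeq : p = y * Real.exp (-1) := by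
    rw [hy, Real.exp_neg]
    have h := Real.exp_pos 1
    field_simp
  have hkey : ∀ m : ℕ, m ≤ d → p ≤ y * (1 - y) ^ m := by
    intro m hm
    have h1 : (d : ℝ) / (d + 1) ≤ 1 - y := by
      rw [div_le_iff₀ (by positivity)]
      nlinarith
    have hdd0 : (0 : ℝ) ≤ (d : ℝ) / (d + 1) := by positivity
    have h2 : ((d : ℝ) / (d + 1)) ^ d ≤ (1 - y) ^ m := by
      calc ((d : ℝ) / (d + 1)) ^ d ≤ (1 - y) ^ d := pow_le_pow_left₀ hdd0 h1 d
        _ ≤ (1 - y) ^ m := pow_le_pow_of_le_one (by linarith) (by linarith) hm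
    have h3 : Real.exp (-1) ≤ (1 - y) ^ m := le_trans (ratio_pow_ge d) h2
    rw [hpeq]
    exact mul_le_mul_of_nonneg_left h3 hy0
  intro k
  induction k with
  | zero =>
    intro S hSI hS
    have hSe : S = ∅ := Finset.card_eq_zero.mp (Nat.le_zero.mp hS)
    subst hSe
    constructor
    · rw [fCnt_empty]; exact Fintype.card_pos
    · intro i hi _
      have h := hind i hi ∅ (Finset.empty_subset _) (Finset.notMem_empty i)
        (Finset.disjoint_empty_left _)
      calc (gCnt A i ∅ : ℝ) ≤ p * fCnt A ∅ := h
        _ ≤ y * fCnt A ∅ := mul_le_mul_of_nonneg_right hpy (by positivity)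
  | succ k IH =>
    intro S hSI hS
    by_cases hc : S.card ≤ k
    · exact IH S hSI hc
    have hcard : S.card = k + 1 := by omega
    have hpos : 0 < fCnt A S := by
      obtain ⟨j, hj⟩ := Finset.card_pos.mp (show 0 < S.card by omega)
      set T := S.erase j with hTdef
      have hTI : T ⊆ I := (Finset.erase_subset j S).trans hSI
      have hTc : T.card ≤ k := by
        rw [hTdef, Finset.card_erase_of_mem hj]; omega
      obtain ⟨hTpos, hTg⟩ := IH T hTI hTc
      have hins := fCnt_insert A j T
      have hS' : insert j T = S := Finset.insert_erase hj
      have hg : (gCnt A j T : ℝ) ≤ y * fCnt A T :=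
        hTg j (hSI hj) (Finset.notMem_erase j S)
      have heq : (fCnt A S : ℝ) = (fCnt A T : ℝ) - gCnt A j T := by
        rw [← hS']
        have := congrArg (fun m : ℕ => (m : ℝ)) hins
        push_cast at this
        linarith
      have hTpos' : (0 : ℝ) < fCnt A T := by exact_mod_cast hTpos
      have : (0 : ℝ) < fCnt A S := by
        rw [heq]
        nlinarith
      exact_mod_cast this
    refine ⟨hpos, ?_⟩
    intro i hiI hiS
    set S₁ := S ∩ Γ i with hS₁def
    set S₂ := S \ Γ i with hS₂def
    have hS₁S : S₁ ⊆ S := Finset.inter_subset_left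
    have hS₂S : S₂ ⊆ S := Finset.sdiff_subset
    have hm : S₁.card ≤ d := by
      have hiΓI : i ∈ Γ i ∩ I := Finset.mem_inter.mpr ⟨hself i hiI, hiI⟩
      have h1 : S₁ ⊆ (Γ i ∩ I).erase i := by
        intro a ha
        rw [Finset.mem_erase]
        rw [hS₁def, Finset.mem_inter] at ha
        exact ⟨fun h => hiS (h ▸ ha.1), Finset.mem_inter.mpr ⟨ha.2, hSI ha.1⟩⟩
      have h2 := Finset.card_le_card h1
      rw [Finset.card_erase_of_mem hiΓI] at h2
      have h3 := hdeg i hiI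
      omega
    have hchain : ∀ U : Finset ι, U ⊆ S₁ →
        (1 - y) ^ U.card * fCnt A S₂ ≤ fCnt A (S₂ ∪ U) := by
      intro U
      induction U using Finset.induction_on with
      | empty => intro _; simp
      | @insert a U ha IH2 =>
        intro hUS
        have haS₁ : a ∈ S₁ := hUS (Finset.mem_insert_self a U)
        have hUsub : U ⊆ S₁ := fun x hx => hUS (Finset.mem_insert_of_mem hx)
        have h2 := IH2 hUsub
        have hset : S₂ ∪ insert a U = insert a (S₂ ∪ U) := Finset.union_insert a S₂ U
        have haS : a ∈ S := hS₁S haS₁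
        have haS₂ : a ∉ S₂ := by
          rw [hS₂def, Finset.mem_sdiff]
          push_neg
          intro _
          exact (Finset.mem_inter.mp (hS₁def ▸ haS₁)).2
        have hanm : a ∉ S₂ ∪ U := by
          rw [Finset.mem_union]; push_neg; exact ⟨haS₂, ha⟩
        have hsub : S₂ ∪ U ⊆ I :=
          Finset.union_subset (hS₂S.trans hSI) ((hUsub.trans hS₁S).trans hSI)
        have hcardle : (S₂ ∪ U).card ≤ k := by
          have hsubS : S₂ ∪ U ⊆ S.erase a := by
            intro x hx
            rw [Finset.mem_erase]
            constructor
            · rintro rfl; exact hanm hx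
            · rcases Finset.mem_union.mp hx with h | h
              · exact hS₂S h
              · exact hS₁S (hUsub h)
          have := Finset.card_le_card hsubS
          rw [Finset.card_erase_of_mem haS] at this
          omega
        obtain ⟨hfp, hg⟩ := IH (S₂ ∪ U) hsub hcardle
        have hga : (gCnt A a (S₂ ∪ U) : ℝ) ≤ y * fCnt A (S₂ ∪ U) :=
          hg a (hSI haS) hanm
        have hins := fCnt_insert A a (S₂ ∪ U)
        have heq2 : (fCnt A (S₂ ∪ insert a U) : ℝ)
            = (fCnt A (S₂ ∪ U) : ℝ) - gCnt A a (S₂ ∪ U) := by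
          rw [hset]
          have := congrArg (fun m : ℕ => (m : ℝ)) hins
          push_cast at this
          linarith
        calc (1 - y) ^ (insert a U).card * fCnt A S₂
            = (1 - y) * ((1 - y) ^ U.card * fCnt A S₂) := by
              rw [Finset.card_insert_of_notMem ha]; ring
          _ ≤ (1 - y) * fCnt A (S₂ ∪ U) :=
              mul_le_mul_of_nonneg_left h2 (by linarith)
          _ ≤ (fCnt A (S₂ ∪ U) : ℝ) - gCnt A a (S₂ ∪ U) := by nlinarith
          _ = fCnt A (S₂ ∪ insert a U) := heq2.symm
    have hSeq : S₂ ∪ S₁ = S := by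
      rw [hS₁def, hS₂def]
      exact Finset.sdiff_union_inter S (Γ i)
    have hchainS : (1 - y) ^ S₁.card * fCnt A S₂ ≤ (fCnt A S : ℝ) := by
      have := hchain S₁ (Finset.Subset.refl _)
      rwa [hSeq] at this
    have hindS₂ : (gCnt A i S₂ : ℝ) ≤ p * fCnt A S₂ := by
      apply hind i hiI S₂ (hS₂S.trans hSI)
      · intro h; exact hiS (hS₂S h)
      · exact Finset.disjoint_left.mpr
          (fun a haS₂ haΓ => (Finset.mem_sdiff.mp (hS₂def ▸ haS₂)).2 haΓ)
    have hmono : gCnt A i S ≤ gCnt A i S₂ := gCnt_mono A i hS₂S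
    have hp' : p ≤ y * (1 - y) ^ S₁.card := hkey _ hm
    have hf₂0 : (0 : ℝ) ≤ fCnt A S₂ := by positivity
    calc (gCnt A i S : ℝ) ≤ gCnt A i S₂ := by exact_mod_cast hmono
      _ ≤ p * fCnt A S₂ := hindS₂
      _ ≤ (y * (1 - y) ^ S₁.card) * fCnt A S₂ :=
          mul_le_mul_of_nonneg_right hp' hf₂0
      _ = y * ((1 - y) ^ S₁.card * fCnt A S₂) := by ring
      _ ≤ y * fCnt A S := mul_le_mul_of_nonneg_left hchainS hy0

open Classical in
lemma lll (A : ι → Finset Ω) (I : Finset ι) (Γ : ι → Finset ι)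
    (d : ℕ) (p : ℝ) (hp0 : 0 ≤ p)
    (hself : ∀ i ∈ I, i ∈ Γ i)
    (hdeg : ∀ i ∈ I, (Γ i ∩ I).card ≤ d + 1)
    (hind : ∀ i ∈ I, ∀ T ⊆ I, i ∉ T → Disjoint T (Γ i) →
      (gCnt A i T : ℝ) ≤ p * fCnt A T)
    (hep : Real.exp 1 * p * (d + 1) < 1) :
    ∃ ω : Ω, ∀ i ∈ I, ω ∉ A i := by
  have h := (lll_aux A I Γ d p hp0 hself hdeg hind hep I.card I
    (Finset.Subset.refl _) le_rfl).1
  rw [fCnt] at h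
  obtain ⟨ω, hω⟩ := Finset.card_pos.mp h
  rw [Finset.mem_filter] at hω
  exact ⟨ω, hω.2⟩

end LLL


lemma deg_count {n s r : ℕ} (hsn : s ≤ n) (hrs : r ≤ s) (A : Finset (Fin n)) (hA : A.card = s) :
    (((Finset.powersetCard s (Finset.univ : Finset (Fin n))).filter
        (fun B => r ≤ (A ∩ B).card)).card : ℕ)
      ≤ ∑ i ∈ Finset.Icc r s, (s.choose i) * ((n - s).choose (s - i)) := by
  classical
  set F := (Finset.powersetCard s (Finset.univ : Finset (Fin n))).filter
      (fun B => r ≤ (A ∩ B).card) with hF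
  have hmap : ∀ B ∈ F, (A ∩ B).card ∈ Finset.Icc r s := by
    intro B hB
    rw [hF, Finset.mem_filter, Finset.mem_powersetCard] at hB
    rw [Finset.mem_Icc]
    refine ⟨hB.2, ?_⟩
    calc (A ∩ B).card ≤ A.card := Finset.card_le_card Finset.inter_subset_left
      _ = s := hA
  rw [Finset.card_eq_sum_card_fiberwise hmap]
  apply Finset.sum_le_sum
  intro i hi
  rw [Finset.mem_Icc] at hi
  -- fiber bound
  have hfib : (F.filter (fun B => (A ∩ B).card = i)).card
      ≤ ((Finset.powersetCard i A) ×ˢ (Finset.powersetCard (s - i) Aᶜ)).card := by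
    apply Finset.card_le_card_of_injOn (fun B => (A ∩ B, B \ A))
    · intro B hB
      rw [Finset.mem_coe, Finset.mem_filter, hF, Finset.mem_filter, Finset.mem_powersetCard] at hB
      obtain ⟨⟨⟨_, hBcard⟩, _⟩, hBi⟩ := hB
      rw [Finset.mem_coe, Finset.mem_product, Finset.mem_powersetCard, Finset.mem_powersetCard]
      refine ⟨⟨Finset.inter_subset_left, hBi⟩, ?_, ?_⟩
      · intro x hx
        rw [Finset.mem_sdiff] at hx
        rw [Finset.mem_compl]
        exact hx.2
      · show (B \ A).card = s - i
        have h1 := Finset.card_sdiff_add_card_inter B A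
        rw [Finset.inter_comm B A] at h1
        omega
    · intro B hB B' hB' heq
      simp only [Prod.mk.injEq] at heq
      have hrec : ∀ C : Finset (Fin n), (A ∩ C) ∪ (C \ A) = C := by
        intro C
        ext x
        simp only [Finset.mem_union, Finset.mem_inter, Finset.mem_sdiff]
        tauto
      rw [← hrec B, ← hrec B', heq.1, heq.2]
  calc (F.filter (fun B => (A ∩ B).card = i)).card
      ≤ ((Finset.powersetCard i A) ×ˢ (Finset.powersetCard (s - i) Aᶜ)).card := hfib
    _ = (s.choose i) * ((n - s).choose (s - i)) := by
        rw [Finset.card_product, Finset.card_powersetCard, Finset.card_powersetCard,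
          Finset.card_compl, hA]
        simp [Fintype.card_fin]

def BadSet (n ℓ r : ℕ) (q : Finset (Fin n) × Fin ℓ) : Finset (Finset (Fin n) → Fin ℓ) :=
  Finset.univ.filter (fun c => ∀ e ∈ Finset.powersetCard r q.1, c e ≠ q.2)

def IdxSet (n s ℓ : ℕ) : Finset (Finset (Fin n) × Fin ℓ) :=
  (Finset.powersetCard s (Finset.univ : Finset (Fin n))) ×ˢ (Finset.univ : Finset (Fin ℓ))

def GammaSet (n s r ℓ : ℕ) (q : Finset (Fin n) × Fin ℓ) : Finset (Finset (Fin n) × Fin ℓ) :=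
  ((Finset.powersetCard s (Finset.univ : Finset (Fin n))).filter
    (fun B => r ≤ (q.1 ∩ B).card)) ×ˢ (Finset.univ : Finset (Fin ℓ))

lemma mem_BadSet {n ℓ r : ℕ} (q : Finset (Fin n) × Fin ℓ) (c : Finset (Fin n) → Fin ℓ) :
    c ∈ BadSet n ℓ r q ↔ ∀ e ∈ Finset.powersetCard r q.1, c e ≠ q.2 := by
  simp [BadSet]

lemma not_mem_BadSet {n ℓ r : ℕ} (q : Finset (Fin n) × Fin ℓ) (c : Finset (Fin n) → Fin ℓ) :
    c ∉ BadSet n ℓ r q ↔ ∃ e ∈ Finset.powersetCard r q.1, c e = q.2 := by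
  rw [mem_BadSet]
  push_neg
  simp


lemma card_filter_subsingleton {α : Type*} [Fintype α] {p : α → Prop}
    (h1 h2 : DecidablePred p) :
    (@Finset.filter α p h1 Finset.univ).card = (@Finset.filter α p h2 Finset.univ).card := by
  congr 1
  ext a
  simp only [Finset.mem_filter]

section CountSplit2
variable {α β : Type*} [Fintype α] [DecidableEq α] [Fintype β] [Nonempty β]

open Classical in
lemma count_split' (E : Finset α) (P Q : (α → β) → Prop)
    (hP : ∀ c c' : α → β, (∀ a ∈ E, c a = c' a) → P c → P c')
    (hQ : ∀ c c' : α → β, (∀ a ∉ E, c a = c' a) → Q c → Q c') :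
    Nat.card {c : α → β // P c ∧ Q c} * Nat.card (α → β)
      = Nat.card {c : α → β // P c} * Nat.card {c : α → β // Q c} := by
  classical
  set e := Equiv.piEquivPiSubtypeProd (· ∈ E) (fun _ : α => β) with he
  obtain ⟨b₀⟩ := ‹Nonempty β›
  set P1 : ({a : α // a ∈ E} → β) → Prop := fun x => P (e.symm (x, fun _ => b₀)) with hP1
  set Q1 : ({a : α // ¬ a ∈ E} → β) → Prop := fun y => Q (e.symm (fun _ => b₀, y)) with hQ1
  have key1 : ∀ c : α → β, P c ↔ P1 (e c).1 := by
    intro c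
    have hagree : ∀ a ∈ E, c a = (e.symm ((e c).1, fun _ => b₀)) a := by
      intro a ha
      simp [he, Equiv.piEquivPiSubtypeProd, ha]
    constructor
    · intro h; exact hP _ _ hagree h
    · intro h; exact hP _ _ (fun a ha => (hagree a ha).symm) h
  have key2 : ∀ c : α → β, Q c ↔ Q1 (e c).2 := by
    intro c
    have hagree : ∀ a ∉ E, c a = (e.symm (fun _ => b₀, (e c).2)) a := by
      intro a ha
      simp [he, Equiv.piEquivPiSubtypeProd, ha]
    constructor
    · intro h; exact hQ _ _ hagree h
    · intro h; exact hQ _ _ (fun a ha => (hagree a ha).symm) h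
  have e0 : (α → β) ≃ ({a : α // a ∈ E} → β) × ({a : α // ¬ a ∈ E} → β) := e
  have e1 : {c : α → β // P c ∧ Q c} ≃ {x : ({a : α // a ∈ E} → β) × ({a : α // ¬ a ∈ E} → β) // P1 x.1 ∧ Q1 x.2} :=
    e.subtypeEquiv (fun c => and_congr (key1 c) (key2 c))
  have e2 : {x : ({a : α // a ∈ E} → β) × ({a : α // ¬ a ∈ E} → β) // P1 x.1 ∧ Q1 x.2} ≃ {x : ({a : α // a ∈ E} → β) // P1 x} × {y : ({a : α // ¬ a ∈ E} → β) // Q1 y} :=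
    Equiv.subtypeProdEquivProd
  have e3 : {c : α → β // P c} ≃ {x : ({a : α // a ∈ E} → β) × ({a : α // ¬ a ∈ E} → β) // P1 x.1} := e.subtypeEquiv key1
  have e4 : {x : ({a : α // a ∈ E} → β) × ({a : α // ¬ a ∈ E} → β) // P1 x.1} ≃ {x : ({a : α // a ∈ E} → β) // P1 x} × ({a : α // ¬ a ∈ E} → β) :=
    Equiv.prodSubtypeFstEquivSubtypeProd
  have e5 : {c : α → β // Q c} ≃ {x : ({a : α // a ∈ E} → β) × ({a : α // ¬ a ∈ E} → β) // Q1 x.2} := e.subtypeEquiv key2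
  have e6 : {x : ({a : α // a ∈ E} → β) × ({a : α // ¬ a ∈ E} → β) // Q1 x.2} ≃ {y : ({a : α // ¬ a ∈ E} → β) × ({a : α // a ∈ E} → β) // Q1 y.1} :=
    (Equiv.prodComm ({a : α // a ∈ E} → β) ({a : α // ¬ a ∈ E} → β)).subtypeEquiv (fun x => Iff.rfl)
  have e7 : {y : ({a : α // ¬ a ∈ E} → β) × ({a : α // a ∈ E} → β) // Q1 y.1} ≃ {y : ({a : α // ¬ a ∈ E} → β) // Q1 y} × ({a : α // a ∈ E} → β) :=
    Equiv.prodSubtypeFstEquivSubtypeProd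
  have c1 : Nat.card {c : α → β // P c ∧ Q c}
      = Nat.card {x : ({a : α // a ∈ E} → β) // P1 x} * Nat.card {y : ({a : α // ¬ a ∈ E} → β) // Q1 y} := by
    rw [Nat.card_congr (e1.trans e2), Nat.card_prod]
  have c2 : Nat.card {c : α → β // P c} = Nat.card {x : ({a : α // a ∈ E} → β) // P1 x} * Nat.card ({a : α // ¬ a ∈ E} → β) := by
    rw [Nat.card_congr (e3.trans e4), Nat.card_prod]
  have c3 : Nat.card {c : α → β // Q c} = Nat.card {y : ({a : α // ¬ a ∈ E} → β) // Q1 y} * Nat.card ({a : α // a ∈ E} → β) := by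
    rw [Nat.card_congr ((e5.trans e6).trans e7), Nat.card_prod]
  have c4 : Nat.card (α → β) = Nat.card ({a : α // a ∈ E} → β) * Nat.card ({a : α // ¬ a ∈ E} → β) := by
    rw [Nat.card_congr e0, Nat.card_prod]
  rw [c1, c2, c3, c4]
  ring

end CountSplit2

lemma card_filter_nat_card {α : Type*} [Fintype α] (p : α → Prop) [DecidablePred p] :
    (Finset.univ.filter p).card = Nat.card {a // p a} := by
  rw [Nat.card_eq_fintype_card, Fintype.card_subtype]


set_option maxHeartbeats 1000000 in
lemma ind_bound (n s r ℓ : ℕ) (hℓ : 1 ≤ ℓ) :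
    ∀ q ∈ IdxSet n s ℓ, ∀ T ⊆ IdxSet n s ℓ, q ∉ T → Disjoint T (GammaSet n s r ℓ q) →
      (gCnt (BadSet n ℓ r) q T : ℝ)
        ≤ (1 - 1 / (ℓ : ℝ)) ^ (s.choose r) * fCnt (BadSet n ℓ r) T := by
  haveI : Nonempty (Fin ℓ) := ⟨⟨0, hℓ⟩⟩
  have hℓR : (1 : ℝ) ≤ (ℓ : ℝ) := by exact_mod_cast hℓ
  have hℓ0 : (0 : ℝ) < (ℓ : ℝ) := by linarith
  intro q hqI T hTI hqT hdisj
  obtain ⟨B, j⟩ := q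
  have hB : B.card = s := by
    rw [IdxSet, Finset.mem_product] at hqI
    exact (Finset.mem_powersetCard.mp hqI.1).2
  have hcoord : ∀ q' ∈ T, ∀ e ∈ Finset.powersetCard r q'.1,
      e ∉ Finset.powersetCard r B := by
    intro q' hq' e he heE
    have hq'Γ : q' ∉ GammaSet n s r ℓ (B, j) := Finset.disjoint_left.mp hdisj hq'
    have hq'I := hTI hq'
    rw [IdxSet, Finset.mem_product] at hq'I
    rw [GammaSet, Finset.mem_product] at hq'Γ
    push_neg at hq'Γ
    have h2 := hq'Γ (Finset.mem_filter.mpr ⟨hq'I.1, ?_⟩)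
    · exact h2 (Finset.mem_univ _)
    · rw [Finset.mem_powersetCard] at he
      rw [Finset.mem_powersetCard] at heE
      have hsub : e ⊆ B ∩ q'.1 := Finset.subset_inter heE.1 he.1
      calc r = e.card := heE.2.symm
        _ ≤ (B ∩ q'.1).card := Finset.card_le_card hsub
  have hPdep : ∀ c c' : Finset (Fin n) → Fin ℓ,
      (∀ a ∈ Finset.powersetCard r B, c a = c' a) →
      (∀ e ∈ Finset.powersetCard r B, c e ≠ j) →
      (∀ e ∈ Finset.powersetCard r B, c' e ≠ j) := by
    intro c c' hagree hc e he
    rw [← hagree e he]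
    exact hc e he
  have hQdep : ∀ c c' : Finset (Fin n) → Fin ℓ,
      (∀ a ∉ Finset.powersetCard r B, c a = c' a) →
      (∀ q' ∈ T, ∃ e ∈ Finset.powersetCard r q'.1, c e = q'.2) →
      (∀ q' ∈ T, ∃ e ∈ Finset.powersetCard r q'.1, c' e = q'.2) := by
    intro c c' hagree hc q' hq'
    obtain ⟨e, he, hce⟩ := hc q' hq'
    exact ⟨e, he, by rw [← hagree e (hcoord q' hq' e he)]; exact hce⟩
  have hsplit := count_split' (Finset.powersetCard r B)
    (fun c => ∀ e ∈ Finset.powersetCard r B, c e ≠ j)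
    (fun c => ∀ q' ∈ T, ∃ e ∈ Finset.powersetCard r q'.1, c e = q'.2) hPdep hQdep
  have hgeq : gCnt (BadSet n ℓ r) (B, j) T
      = (Finset.univ.filter (fun c : Finset (Fin n) → Fin ℓ =>
          (∀ e ∈ Finset.powersetCard r B, c e ≠ j) ∧
          ∀ q' ∈ T, ∃ e ∈ Finset.powersetCard r q'.1, c e = q'.2)).card := by
    unfold gCnt
    congr 1
    ext c
    simp only [Finset.mem_filter, Finset.mem_univ, true_and]
    constructor
    · rintro ⟨h1, h2⟩
      exact ⟨(mem_BadSet (B, j) c).mp h1,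
        fun q' hq' => (not_mem_BadSet q' c).mp (h2 q' hq')⟩
    · rintro ⟨h1, h2⟩
      exact ⟨(mem_BadSet (B, j) c).mpr h1,
        fun q' hq' => (not_mem_BadSet q' c).mpr (h2 q' hq')⟩
  have hfeq : fCnt (BadSet n ℓ r) T
      = (Finset.univ.filter (fun c : Finset (Fin n) → Fin ℓ =>
          ∀ q' ∈ T, ∃ e ∈ Finset.powersetCard r q'.1, c e = q'.2)).card := by
    unfold fCnt
    congr 1
    ext c
    simp only [Finset.mem_filter, Finset.mem_univ, true_and]
    constructor
    · intro h q' hq'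
      exact (not_mem_BadSet q' c).mp (h q' hq')
    · intro h q' hq'
      exact (not_mem_BadSet q' c).mpr (h q' hq')
  have hPcount : (Finset.univ.filter (fun c : Finset (Fin n) → Fin ℓ =>
        ∀ e ∈ Finset.powersetCard r B, c e ≠ j)).card
      = (ℓ - 1) ^ (Finset.powersetCard r B).card
          * ℓ ^ (Fintype.card (Finset (Fin n)) - (Finset.powersetCard r B).card) := by
    have h := card_avoid (Finset.powersetCard r B) j
    rw [Fintype.card_fin] at h
    exact h
  have hgN : gCnt (BadSet n ℓ r) (B, j) T
      = Nat.card {c : Finset (Fin n) → Fin ℓ //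
          (∀ e ∈ Finset.powersetCard r B, c e ≠ j) ∧
          ∀ q' ∈ T, ∃ e ∈ Finset.powersetCard r q'.1, c e = q'.2} :=
    hgeq.trans (card_filter_nat_card _)
  have hfN : fCnt (BadSet n ℓ r) T
      = Nat.card {c : Finset (Fin n) → Fin ℓ //
          ∀ q' ∈ T, ∃ e ∈ Finset.powersetCard r q'.1, c e = q'.2} :=
    hfeq.trans (card_filter_nat_card _)
  set M := Fintype.card (Finset (Fin n)) with hM
  set C := (Finset.powersetCard r B).card with hC
  have hEcard : C = s.choose r := by
    rw [hC, Finset.card_powersetCard, hB]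
  have hCM : C ≤ M := Finset.card_le_univ _
  have hΩN : Nat.card (Finset (Fin n) → Fin ℓ) = ℓ ^ M := by
    rw [Nat.card_eq_fintype_card, Fintype.card_fun, Fintype.card_fin]
  have hPN : Nat.card {c : Finset (Fin n) → Fin ℓ //
        ∀ e ∈ Finset.powersetCard r B, c e ≠ j}
      = (ℓ - 1) ^ C * ℓ ^ (M - C) :=
    (card_filter_nat_card _).symm.trans hPcount
  have hnat : gCnt (BadSet n ℓ r) (B, j) T * ℓ ^ M
      = (ℓ - 1) ^ C * ℓ ^ (M - C) * fCnt (BadSet n ℓ r) T := by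
    rw [hgN, hfN, ← hΩN, ← hPN]
    exact hsplit
  have hcast : (gCnt (BadSet n ℓ r) (B, j) T : ℝ) * (ℓ : ℝ) ^ M
      = ((ℓ : ℝ) - 1) ^ C * (ℓ : ℝ) ^ (M - C) * (fCnt (BadSet n ℓ r) T : ℝ) := by
    have h := congrArg (fun m : ℕ => (m : ℝ)) hnat
    push_cast [Nat.cast_sub hℓ] at h
    exact h
  have hratio : ((ℓ : ℝ) - 1) ^ C * (ℓ : ℝ) ^ (M - C)
      = (1 - 1 / (ℓ : ℝ)) ^ (s.choose r) * (ℓ : ℝ) ^ M := by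
    have hsplitpow : (ℓ : ℝ) ^ M = (ℓ : ℝ) ^ C * (ℓ : ℝ) ^ (M - C) := by
      rw [← pow_add, Nat.add_sub_cancel' hCM]
    have hone : (1 - 1 / (ℓ : ℝ)) = ((ℓ : ℝ) - 1) / (ℓ : ℝ) := by
      field_simp
    rw [← hEcard, hsplitpow, hone, div_pow]
    have hℓC0 : ((ℓ : ℝ)) ^ C ≠ 0 := by positivity
    field_simp
  have hℓM0 : (0 : ℝ) < (ℓ : ℝ) ^ M := by positivity
  have heq2 : (gCnt (BadSet n ℓ r) (B, j) T : ℝ) * (ℓ : ℝ) ^ M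
      = ((1 - 1 / (ℓ : ℝ)) ^ (s.choose r) * (fCnt (BadSet n ℓ r) T : ℝ)) * (ℓ : ℝ) ^ M := by
    rw [hcast, hratio]; ring
  have h3 := mul_right_cancel₀ (ne_of_gt hℓM0) heq2
  linarith [h3]


set_option maxHeartbeats 1000000 in
/-- Lovász Local Lemma application: if `e·p·Δ < 1` with
`Δ = Σ_{i=r}^{s} C(s,i)·C(n−s, s−i)` and `p = ℓ·(1 − 1/ℓ)^{C(s,r)}`, then there is a
colouring of all `r`-subsets of `[n]` with `ℓ` colours such that every `s`-subset
contains an `r`-subset of each colour; in particular every colour class is a Turán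
`(n,s,r)`-system. -/
theorem exists_good_colouring (n s r ℓ : ℕ) (hsn : s ≤ n) (hrs : r < s)
    (hr : 1 ≤ r) (hℓ : 1 ≤ ℓ)
    (hLLL : Real.exp 1 * ((ℓ : ℝ) * (1 - 1 / (ℓ : ℝ)) ^ (s.choose r)) *
      (∑ i ∈ Finset.Icc r s, (s.choose i : ℝ) * ((n - s).choose (s - i) : ℝ)) < 1) :
    ∃ c : Finset (Fin n) → Fin ℓ,
      (∀ A : Finset (Fin n), A.card = s → ∀ j : Fin ℓ,
        ∃ e ⊆ A, e.card = r ∧ c e = j) ∧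
      ∀ j : Fin ℓ, IsTuranSystem s r
        ((Finset.powersetCard r (Finset.univ : Finset (Fin n))).filter
          (fun e => c e = j)) := by
  classical
  haveI : Nonempty (Fin ℓ) := ⟨⟨0, hℓ⟩⟩
  set Δnat : ℕ := ∑ i ∈ Finset.Icc r s, (s.choose i) * ((n - s).choose (s - i)) with hΔ
  have hΔ1 : 1 ≤ Δnat := by
    have hmem : s ∈ Finset.Icc r s := Finset.mem_Icc.mpr ⟨hrs.le, le_rfl⟩
    have h := Finset.single_le_sum
      (f := fun i => (s.choose i) * ((n - s).choose (s - i)))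
      (fun i _ => Nat.zero_le _) hmem
    simpa using h
  set d : ℕ := ℓ * Δnat - 1 with hd
  have hd1 : d + 1 = ℓ * Δnat := by
    have h := Nat.mul_le_mul hℓ hΔ1
    omega
  set p : ℝ := (1 - 1 / (ℓ : ℝ)) ^ (s.choose r) with hp
  have hℓR : (1 : ℝ) ≤ (ℓ : ℝ) := by exact_mod_cast hℓ
  have hℓ0 : (0 : ℝ) < (ℓ : ℝ) := by linarith
  have hp0 : 0 ≤ p := by
    apply pow_nonneg
    have h : 1 / (ℓ : ℝ) ≤ 1 := by
      rw [div_le_one hℓ0]; exact hℓR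
    linarith
  have hself : ∀ q ∈ IdxSet n s ℓ, q ∈ GammaSet n s r ℓ q := by
    intro q hq
    rw [IdxSet, Finset.mem_product] at hq
    rw [GammaSet, Finset.mem_product]
    refine ⟨Finset.mem_filter.mpr ⟨hq.1, ?_⟩, Finset.mem_univ _⟩
    rw [Finset.inter_self]
    rw [Finset.mem_powersetCard] at hq
    rw [hq.1.2]
    exact hrs.le
  have hdeg : ∀ q ∈ IdxSet n s ℓ, (GammaSet n s r ℓ q ∩ IdxSet n s ℓ).card ≤ d + 1 := by
    intro q hq
    rw [hd1]
    rw [IdxSet, Finset.mem_product, Finset.mem_powersetCard] at hq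
    calc (GammaSet n s r ℓ q ∩ IdxSet n s ℓ).card
        ≤ (GammaSet n s r ℓ q).card := Finset.card_le_card Finset.inter_subset_left
      _ = ((Finset.powersetCard s (Finset.univ : Finset (Fin n))).filter
            (fun B => r ≤ (q.1 ∩ B).card)).card * ℓ := by
          rw [GammaSet, Finset.card_product, Finset.card_univ, Fintype.card_fin]
      _ ≤ Δnat * ℓ := Nat.mul_le_mul_right ℓ (deg_count hsn hrs.le q.1 hq.1.2)
      _ = ℓ * Δnat := Nat.mul_comm _ _
  have hep : Real.exp 1 * p * ((d : ℝ) + 1) < 1 := by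
    have hcastd : ((d : ℝ) + 1) = (ℓ : ℝ) * (Δnat : ℝ) := by
      have h : ((d + 1 : ℕ) : ℝ) = ((ℓ * Δnat : ℕ) : ℝ) := by rw [hd1]
      push_cast at h
      linarith
    have hΔcast : (Δnat : ℝ)
        = ∑ i ∈ Finset.Icc r s, (s.choose i : ℝ) * ((n - s).choose (s - i) : ℝ) := by
      rw [hΔ]
      push_cast
      rfl
    rw [hcastd]
    calc Real.exp 1 * p * ((ℓ : ℝ) * (Δnat : ℝ))
        = Real.exp 1 * ((ℓ : ℝ) * (1 - 1 / (ℓ : ℝ)) ^ (s.choose r))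
            * (Δnat : ℝ) := by rw [hp]; ring
      _ < 1 := by rw [hΔcast]; exact hLLL
  obtain ⟨c, hc⟩ := lll (BadSet n ℓ r) (IdxSet n s ℓ) (GammaSet n s r ℓ) d p hp0
    hself hdeg (ind_bound n s r ℓ hℓ) hep
  have hgood : ∀ A : Finset (Fin n), A.card = s → ∀ j : Fin ℓ,
      ∃ e ⊆ A, e.card = r ∧ c e = j := by
    intro A hA j
    have hAI : (A, j) ∈ IdxSet n s ℓ := by
      rw [IdxSet, Finset.mem_product]
      exact ⟨Finset.mem_powersetCard.mpr ⟨Finset.subset_univ A, hA⟩, Finset.mem_univ j⟩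
    have h := (not_mem_BadSet (A, j) c).mp (hc (A, j) hAI)
    obtain ⟨e, he, hce⟩ := h
    rw [Finset.mem_powersetCard] at he
    exact ⟨e, he.1, he.2, hce⟩
  refine ⟨c, hgood, ?_⟩
  intro j
  constructor
  · intro e he
    rw [Finset.mem_filter, Finset.mem_powersetCard] at he
    exact he.1.2
  · intro A hA
    obtain ⟨e, heA, her, hce⟩ := hgood A hA j
    exact ⟨e, Finset.mem_filter.mpr
      ⟨Finset.mem_powersetCard.mpr ⟨Finset.subset_univ e, her⟩, hce⟩, heA⟩
end

section
/- Let n ≥ s > r ≥ 1 and ℓ ≥ 1 be integers, let Δ := Σ_{i=r}^{s} C(s,i)·C(n−s, s−i), and let p := ℓ·(1 − 1/ℓ)^{C(s,r)}. If e·p·Δ < 1, then T(n,s,r) ≤ C(n,r)/ℓ. -/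
open Finset

section AuxLLL

variable {α : Type*} [DecidableEq α]

lemma sum_w_one (q : ℝ) (F : Finset α) :
    ∑ R ∈ F.powerset, q ^ R.card * (1 - q) ^ (F.card - R.card) = 1 := by
  induction F using Finset.induction_on with
  | empty => simp
  | @insert x F hx ih =>
    have hinj : ∀ R ∈ F.powerset, ∀ R' ∈ F.powerset, insert x R = insert x R' → R = R' := by
      intro a ha b hb h
      have hxa : x ∉ a := fun hx' => hx (mem_powerset.mp ha hx')
      have hxb : x ∉ b := fun hx' => hx (mem_powerset.mp hb hx')
      rw [← Finset.erase_insert hxa, ← Finset.erase_insert hxb, h]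
    have hdisj : Disjoint F.powerset (F.powerset.image (insert x)) := by
      rw [Finset.disjoint_left]
      rintro R hR hR'
      obtain ⟨R', hR', rfl⟩ := Finset.mem_image.mp hR'
      exact hx (mem_powerset.mp hR (mem_insert_self x R'))
    rw [powerset_insert, sum_union hdisj, sum_image hinj,
      card_insert_of_notMem hx]
    have h1 : ∀ R ∈ F.powerset,
        q ^ R.card * (1 - q) ^ (F.card + 1 - R.card)
          = (1 - q) * (q ^ R.card * (1 - q) ^ (F.card - R.card)) := by
      intro R hR
      have hc : R.card ≤ F.card := card_le_card (mem_powerset.mp hR)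
      have : F.card + 1 - R.card = (F.card - R.card) + 1 := by omega
      rw [this, pow_succ]; ring
    have h2 : ∀ R ∈ F.powerset,
        q ^ (insert x R).card * (1 - q) ^ (F.card + 1 - (insert x R).card)
          = q * (q ^ R.card * (1 - q) ^ (F.card - R.card)) := by
      intro R hR
      have hxR : x ∉ R := fun hx' => hx (mem_powerset.mp hR hx')
      rw [card_insert_of_notMem hxR]
      have : F.card + 1 - (R.card + 1) = F.card - R.card := by omega
      rw [this, pow_succ]; ring
    rw [sum_congr rfl h1, sum_congr rfl h2, ← mul_sum, ← mul_sum, ih]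
    ring

lemma sum_w_card (q : ℝ) (F : Finset α) :
    ∑ R ∈ F.powerset, (R.card : ℝ) * (q ^ R.card * (1 - q) ^ (F.card - R.card))
      = F.card * q := by
  induction F using Finset.induction_on with
  | empty => simp
  | @insert x F hx ih =>
    have hinj : ∀ R ∈ F.powerset, ∀ R' ∈ F.powerset, insert x R = insert x R' → R = R' := by
      intro a ha b hb h
      have hxa : x ∉ a := fun hx' => hx (mem_powerset.mp ha hx')
      have hxb : x ∉ b := fun hx' => hx (mem_powerset.mp hb hx')
      rw [← Finset.erase_insert hxa, ← Finset.erase_insert hxb, h]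
    have hdisj : Disjoint F.powerset (F.powerset.image (insert x)) := by
      rw [Finset.disjoint_left]
      rintro R hR hR'
      obtain ⟨R', hR', rfl⟩ := Finset.mem_image.mp hR'
      exact hx (mem_powerset.mp hR (mem_insert_self x R'))
    rw [powerset_insert, sum_union hdisj, sum_image hinj,
      card_insert_of_notMem hx]
    have h1 : ∀ R ∈ F.powerset,
        (R.card : ℝ) * (q ^ R.card * (1 - q) ^ (F.card + 1 - R.card))
          = (1 - q) * ((R.card : ℝ) * (q ^ R.card * (1 - q) ^ (F.card - R.card))) := by
      intro R hR
      have hc : R.card ≤ F.card := card_le_card (mem_powerset.mp hR)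
      have : F.card + 1 - R.card = (F.card - R.card) + 1 := by omega
      rw [this, pow_succ]; ring
    have h2 : ∀ R ∈ F.powerset,
        ((insert x R).card : ℝ)
            * (q ^ (insert x R).card * (1 - q) ^ (F.card + 1 - (insert x R).card))
          = q * ((R.card : ℝ) * (q ^ R.card * (1 - q) ^ (F.card - R.card)))
            + q * (q ^ R.card * (1 - q) ^ (F.card - R.card)) := by
      intro R hR
      have hxR : x ∉ R := fun hx' => hx (mem_powerset.mp hR hx')
      rw [card_insert_of_notMem hxR]
      have : F.card + 1 - (R.card + 1) = F.card - R.card := by omega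
      rw [this, pow_succ]
      push_cast
      ring
    rw [sum_congr rfl h1, sum_congr rfl h2, ← mul_sum, sum_add_distrib, ← mul_sum, ← mul_sum,
      ih, sum_w_one]
    push_cast
    ring

lemma sum_w_disjoint (q : ℝ) (F G : Finset α) (hG : G ⊆ F) :
    ∑ R ∈ F.powerset.filter (fun R => Disjoint R G),
        q ^ R.card * (1 - q) ^ (F.card - R.card) = (1 - q) ^ G.card := by
  have hset : F.powerset.filter (fun R => Disjoint R G) = (F \ G).powerset := by
    ext R
    simp only [mem_filter, mem_powerset, subset_sdiff]
  rw [hset]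
  have hcard : (F \ G).card = F.card - G.card := card_sdiff_of_subset hG
  have hGF : G.card ≤ F.card := card_le_card hG
  have key : ∀ R ∈ (F \ G).powerset,
      q ^ R.card * (1 - q) ^ (F.card - R.card)
        = (1 - q) ^ G.card * (q ^ R.card * (1 - q) ^ ((F \ G).card - R.card)) := by
    intro R hR
    have hc : R.card ≤ (F \ G).card := card_le_card (mem_powerset.mp hR)
    have : F.card - R.card = ((F \ G).card - R.card) + G.card := by omega
    rw [this, pow_add]; ring
  rw [sum_congr rfl key, ← mul_sum, sum_w_one, mul_one]

lemma choose_nat_ineq (n s r : ℕ) (hsn : s ≤ n) (hrs : r < s) :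
    n.choose s * s.choose r
      ≤ n.choose r * ∑ i ∈ Finset.Icc r s, s.choose i * (n - s).choose (s - i) := by
  rw [Nat.choose_mul hrs.le]
  refine Nat.mul_le_mul le_rfl ?_
  have h1 : n - r = (s - r) + (n - s) := by omega
  rw [h1, Nat.add_choose_eq, Finset.Nat.sum_antidiagonal_eq_sum_range_succ_mk]
  have h2 : ∑ i ∈ Finset.Icc r s, s.choose i * (n - s).choose (s - i)
      = ∑ j ∈ Finset.range (s - r + 1), s.choose (r + j) * (n - s).choose (s - (r + j)) := by
    rw [← Finset.Ico_add_one_right_eq_Icc, Finset.sum_Ico_eq_sum_range,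
      show s + 1 - r = s - r + 1 by omega]
  rw [h2]
  refine Finset.sum_le_sum fun j hj => ?_
  rw [Finset.mem_range] at hj
  have hj' : j ≤ s - r := by omega
  have e1 : s - (r + j) = s - r - j := by omega
  rw [e1]
  refine Nat.mul_le_mul ?_ le_rfl
  have e2 : s.choose (r + j) = s.choose (s - r - j) := by
    rw [← Nat.choose_symm (by omega : r + j ≤ s)]
    congr 1
  rw [e2, ← Nat.choose_symm hj']
  exact Nat.choose_le_choose _ (by omega)

end AuxLLL


lemma LLL_numeric (k : ℕ) (L D N M : ℝ) (hk2 : 2 ≤ k) (hL2 : (2:ℝ) ≤ L)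
    (hD1 : (1:ℝ) ≤ D) (hN0 : (0:ℝ) ≤ N) (hM0 : (0:ℝ) ≤ M)
    (hMK : M * (k : ℝ) ≤ N * D)
    (hLLL : Real.exp 1 * (L * (1 - 1 / L) ^ k) * D < 1) :
    N * ((1 - 1 / (k : ℝ)) / L) + M * (1 - (1 - 1 / (k : ℝ)) / L) ^ k ≤ N / L := by
  have hK2 : (2:ℝ) ≤ (k : ℝ) := by exact_mod_cast hk2
  have hK0 : (0:ℝ) < (k : ℝ) := by linarith
  have hKne : (k : ℝ) ≠ 0 := ne_of_gt hK0
  have hL0 : (0:ℝ) < L := by linarith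
  have hLne : L ≠ 0 := ne_of_gt hL0
  have hL1' : (0:ℝ) < L - 1 := by linarith
  have hL1ne : L - 1 ≠ 0 := ne_of_gt hL1'
  have hD0 : (0:ℝ) < D := by linarith
  set q : ℝ := (1 - 1 / (k:ℝ)) / L with hq_def
  have hiK : (0:ℝ) < 1 / (k:ℝ) := by positivity
  have hiK2 : 1 / (k:ℝ) ≤ 1 / 2 := by
    rw [div_le_div_iff₀ hK0 (by norm_num)]; linarith
  have hiL2 : 1 / L ≤ 1 / 2 := by
    rw [div_le_div_iff₀ hL0 (by norm_num)]; linarith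
  have hq0 : 0 < q := by
    apply div_pos _ hL0; linarith
  have h1q : 0 < 1 - q := by
    have h2 : q ≤ 1 / L := by
      rw [hq_def, div_le_div_iff₀ hL0 hL0]
      nlinarith
    linarith
  set c : ℝ := 1 - 1 / L with hc_def
  have hc0 : 0 < c := by rw [hc_def]; linarith
  -- (1-q)^k ≤ e * c^k
  have hcq : 1 - q ≤ c * Real.exp (1 / ((k:ℝ) * (L - 1))) := by
    have h1x : 1 + 1 / ((k:ℝ) * (L - 1)) ≤ Real.exp (1 / ((k:ℝ) * (L - 1))) := by
      have := Real.add_one_le_exp (1 / ((k:ℝ) * (L - 1)))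
      linarith
    have hid : 1 - q = c * (1 + 1 / ((k:ℝ) * (L - 1))) := by
      rw [hq_def, hc_def]
      field_simp
      ring
    rw [hid]
    exact mul_le_mul_of_nonneg_left h1x hc0.le
  have hpowk : (1 - q) ^ k ≤ Real.exp 1 * c ^ k := by
    have h1 : (1 - q) ^ k ≤ (c * Real.exp (1 / ((k:ℝ) * (L - 1)))) ^ k :=
      pow_le_pow_left₀ h1q.le hcq k
    have h2 : (c * Real.exp (1 / ((k:ℝ) * (L - 1)))) ^ k
        = c ^ k * Real.exp ((k : ℝ) * (1 / ((k:ℝ) * (L - 1)))) := by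
      rw [mul_pow, Real.exp_nat_mul]
    have h3 : (k : ℝ) * (1 / ((k:ℝ) * (L - 1))) = 1 / (L - 1) := by
      field_simp
    have h4 : Real.exp (1 / (L - 1)) ≤ Real.exp 1 := by
      apply Real.exp_le_exp.mpr
      rw [div_le_one hL1']
      linarith
    calc (1 - q) ^ k ≤ c ^ k * Real.exp ((k:ℝ) * (1 / ((k:ℝ) * (L - 1)))) := by
          rw [← h2]; exact h1
      _ = c ^ k * Real.exp (1 / (L - 1)) := by rw [h3]
      _ ≤ c ^ k * Real.exp 1 := mul_le_mul_of_nonneg_left h4 (by positivity)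
      _ = Real.exp 1 * c ^ k := by ring
  have hec : Real.exp 1 * c ^ k < 1 / (L * D) := by
    rw [lt_div_iff₀ (by positivity)]
    calc Real.exp 1 * c ^ k * (L * D) = Real.exp 1 * (L * c ^ k) * D := by ring
      _ < 1 := by rw [hc_def]; exact hLLL
  have hstep : M * (1 - q) ^ k ≤ N / (L * (k:ℝ)) := by
    calc M * (1 - q) ^ k ≤ M * (Real.exp 1 * c ^ k) :=
          mul_le_mul_of_nonneg_left hpowk hM0
      _ ≤ M * (1 / (L * D)) := mul_le_mul_of_nonneg_left hec.le hM0
      _ = M / (L * D) := by ring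
      _ ≤ N / (L * (k:ℝ)) := by
          rw [div_le_div_iff₀ (by positivity) (by positivity)]
          nlinarith
  have hNq : N * q = N / L - N / (L * (k:ℝ)) := by
    rw [hq_def]
    field_simp
  rw [hNq]
  linarith

/-- If `e·p·Δ < 1` with `Δ = Σ_{i=r}^{s} C(s,i)·C(n−s, s−i)` and
`p = ℓ·(1 − 1/ℓ)^{C(s,r)}`, then `T(n,s,r) ≤ C(n,r)/ℓ`. -/
theorem turanNum_le_of_LLL (n s r ℓ : ℕ) (hsn : s ≤ n) (hrs : r < s)
    (hr : 1 ≤ r) (hℓ : 1 ≤ ℓ)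
    (hLLL : Real.exp 1 * ((ℓ : ℝ) * (1 - 1 / (ℓ : ℝ)) ^ (s.choose r)) *
      (∑ i ∈ Finset.Icc r s, (s.choose i : ℝ) * ((n - s).choose (s - i) : ℝ)) < 1) :
    (turanNum n s r : ℝ) ≤ (n.choose r : ℝ) / (ℓ : ℝ) := by
  classical
  have hrn : r ≤ n := le_trans hrs.le hsn
  have turan_le : ∀ H : Finset (Finset (Fin n)), IsTuranSystem s r H →
      turanNum n s r ≤ H.card := fun H h => Nat.sInf_le ⟨H, h, rfl⟩
  -- the choice function : an `r`-subset of any big enough set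
  set f : Finset (Fin n) → Finset (Fin n) :=
    fun A => if h : r ≤ A.card then (Finset.exists_subset_card_eq h).choose else ∅ with hf_def
  have hf : ∀ A : Finset (Fin n), r ≤ A.card → f A ⊆ A ∧ (f A).card = r := by
    intro A h
    have : f A = (Finset.exists_subset_card_eq h).choose := by rw [hf_def]; simp [h]
    rw [this]
    obtain ⟨h1, h2⟩ := (Finset.exists_subset_card_eq h).choose_spec
    exact ⟨h1, h2⟩
  rcases eq_or_lt_of_le hℓ with h1 | hℓ2
  · -- case ℓ = 1 : take all r-sets
    subst h1
    set H := Finset.powersetCard r (Finset.univ : Finset (Fin n)) with hH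
    have hT : IsTuranSystem s r H := by
      constructor
      · intro e he; exact (Finset.mem_powersetCard.mp he).2
      · intro A hA
        have hrA : r ≤ A.card := by omega
        exact ⟨f A, Finset.mem_powersetCard.mpr ⟨Finset.subset_univ _, (hf A hrA).2⟩,
          (hf A hrA).1⟩
    have hcard : H.card = n.choose r := by
      rw [hH, Finset.card_powersetCard, Finset.card_univ, Fintype.card_fin]
    have hle := turan_le H hT
    rw [Nat.cast_one, div_one]
    calc (turanNum n s r : ℝ) ≤ (H.card : ℝ) := by exact_mod_cast hle
      _ = (n.choose r : ℝ) := by rw [hcard]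
  · -- case ℓ ≥ 2 : alteration argument
    set k := s.choose r with hk_def
    have hk2 : 2 ≤ k := by
      calc 2 ≤ r + 1 := by omega
        _ = (r + 1).choose r := (Nat.choose_succ_self_right r).symm
        _ ≤ s.choose r := Nat.choose_le_choose r (by omega)
    set L : ℝ := (ℓ : ℝ) with hL_def
    have hℓ2' : 2 ≤ ℓ := hℓ2
    have hL2 : (2 : ℝ) ≤ L := by rw [hL_def]; exact_mod_cast hℓ2'
    have hL0 : (0 : ℝ) < L := by linarith
    have hK2 : (2 : ℝ) ≤ (k : ℝ) := by exact_mod_cast hk2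
    have hK0 : (0 : ℝ) < (k : ℝ) := by linarith
    set q : ℝ := (1 - 1 / (k:ℝ)) / L with hq_def
    have hq0 : 0 < q := by
      apply div_pos _ hL0
      have : 1 / (k:ℝ) ≤ 1 / 2 := by
        rw [div_le_div_iff₀ hK0 (by norm_num)]; linarith
      linarith
    have h1q : 0 < 1 - q := by
      have h0K : 0 < 1 / (k:ℝ) := by positivity
      have h1 : 1 - 1 / (k:ℝ) ≤ 1 := by linarith
      have h2 : q ≤ 1 / L := by
        rw [hq_def, div_le_div_iff₀ hL0 hL0]
        nlinarith
      have : 1 / L ≤ 1 / 2 := by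
        rw [div_le_div_iff₀ hL0 (by norm_num)]; linarith
      linarith
    set F := Finset.powersetCard r (Finset.univ : Finset (Fin n)) with hF_def
    set S := Finset.powersetCard s (Finset.univ : Finset (Fin n)) with hS_def
    have hFcard : F.card = n.choose r := by
      rw [hF_def, Finset.card_powersetCard, Finset.card_univ, Fintype.card_fin]
    have hScard : S.card = n.choose s := by
      rw [hS_def, Finset.card_powersetCard, Finset.card_univ, Fintype.card_fin]
    have hEAsub : ∀ A : Finset (Fin n), Finset.powersetCard r A ⊆ F := by
      intro A e he
      obtain ⟨h1, h2⟩ := Finset.mem_powersetCard.mp he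
      rw [hF_def]
      exact Finset.mem_powersetCard.mpr ⟨Finset.subset_univ _, h2⟩
    have hEAcard : ∀ A ∈ S, (Finset.powersetCard r A).card = k := by
      intro A hA
      have hA' : A.card = s := (Finset.mem_powersetCard.mp hA).2
      rw [Finset.card_powersetCard, hA', hk_def]
    set U : Finset (Finset (Fin n)) → ℕ :=
      fun R => (S.filter (fun A => Disjoint R (Finset.powersetCard r A))).card with hU_def
    -- expectation computation
    have hwU : ∑ R ∈ F.powerset,
        (U R : ℝ) * (q ^ R.card * (1 - q) ^ (F.card - R.card))
          = (S.card : ℝ) * (1 - q) ^ k := by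
      have step1 : ∀ R, (U R : ℝ) = ∑ A ∈ S, if Disjoint R (Finset.powersetCard r A) then (1 : ℝ) else 0 := by
        intro R
        rw [hU_def]
        simp only [Finset.card_filter, Nat.cast_sum, Nat.cast_ite, Nat.cast_one, Nat.cast_zero]
      calc ∑ R ∈ F.powerset, (U R : ℝ) * (q ^ R.card * (1 - q) ^ (F.card - R.card))
          = ∑ R ∈ F.powerset, ∑ A ∈ S,
              (if Disjoint R (Finset.powersetCard r A) then (1:ℝ) else 0)
                * (q ^ R.card * (1 - q) ^ (F.card - R.card)) := by
            refine Finset.sum_congr rfl fun R _ => ?_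
            rw [step1, Finset.sum_mul]
        _ = ∑ A ∈ S, ∑ R ∈ F.powerset,
              (if Disjoint R (Finset.powersetCard r A) then (1:ℝ) else 0)
                * (q ^ R.card * (1 - q) ^ (F.card - R.card)) := Finset.sum_comm
        _ = ∑ A ∈ S, (1 - q) ^ k := by
            refine Finset.sum_congr rfl fun A hA => ?_
            have : ∑ R ∈ F.powerset,
                (if Disjoint R (Finset.powersetCard r A) then (1:ℝ) else 0)
                  * (q ^ R.card * (1 - q) ^ (F.card - R.card))
                = ∑ R ∈ F.powerset.filter (fun R => Disjoint R (Finset.powersetCard r A)),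
                    q ^ R.card * (1 - q) ^ (F.card - R.card) := by
              rw [Finset.sum_filter]
              refine Finset.sum_congr rfl fun R _ => ?_
              by_cases h : Disjoint R (Finset.powersetCard r A) <;> simp [h]
            rw [this, sum_w_disjoint q F (Finset.powersetCard r A) (hEAsub A), hEAcard A hA]
        _ = (S.card : ℝ) * (1 - q) ^ k := by
            rw [Finset.sum_const, nsmul_eq_mul]
    -- existence of a good R
    have hwpos : ∀ R : Finset (Finset (Fin n)),
        0 < q ^ R.card * (1 - q) ^ (F.card - R.card) :=
      fun R => mul_pos (pow_pos hq0 _) (pow_pos h1q _)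
    set B : ℝ := (F.card : ℝ) * q + (S.card : ℝ) * (1 - q) ^ k with hB_def
    have hexists : ∃ R ∈ F.powerset, ((R.card + U R : ℕ) : ℝ) ≤ B := by
      by_contra hcon
      push_neg at hcon
      have hne : F.powerset.Nonempty := ⟨∅, Finset.mem_powerset.mpr (Finset.empty_subset F)⟩
      have hlt : ∑ R ∈ F.powerset, B * (q ^ R.card * (1 - q) ^ (F.card - R.card))
          < ∑ R ∈ F.powerset,
              ((R.card + U R : ℕ) : ℝ) * (q ^ R.card * (1 - q) ^ (F.card - R.card)) := by
        refine Finset.sum_lt_sum_of_nonempty hne fun R hR => ?_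
        exact mul_lt_mul_of_pos_right (hcon R hR) (hwpos R)
      have hL : ∑ R ∈ F.powerset, B * (q ^ R.card * (1 - q) ^ (F.card - R.card)) = B := by
        rw [← Finset.mul_sum, sum_w_one, mul_one]
      have hR : ∑ R ∈ F.powerset,
          ((R.card + U R : ℕ) : ℝ) * (q ^ R.card * (1 - q) ^ (F.card - R.card)) = B := by
        have : ∀ R ∈ F.powerset,
            ((R.card + U R : ℕ) : ℝ) * (q ^ R.card * (1 - q) ^ (F.card - R.card))
              = (R.card : ℝ) * (q ^ R.card * (1 - q) ^ (F.card - R.card))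
                + (U R : ℝ) * (q ^ R.card * (1 - q) ^ (F.card - R.card)) := by
          intro R _
          push_cast
          ring
        rw [Finset.sum_congr rfl this, Finset.sum_add_distrib, sum_w_card, hwU, hB_def]
      rw [hL, hR] at hlt
      exact lt_irrefl _ hlt
    obtain ⟨R, hRmem, hRle⟩ := hexists
    have hRF : R ⊆ F := Finset.mem_powerset.mp hRmem
    -- build the system
    set H : Finset (Finset (Fin n)) :=
      R ∪ (S.filter (fun A => Disjoint R (Finset.powersetCard r A))).image f with hH_def
    have hT : IsTuranSystem s r H := by
      constructor
      · intro e he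
        rcases Finset.mem_union.mp he with h | h
        · exact (Finset.mem_powersetCard.mp (hRF h)).2
        · obtain ⟨A, hA, rfl⟩ := Finset.mem_image.mp h
          have hAS : A ∈ S := (Finset.mem_filter.mp hA).1
          have hA' : A.card = s := (Finset.mem_powersetCard.mp hAS).2
          exact (hf A (by omega)).2
      · intro A hA
        have hAS : A ∈ S := Finset.mem_powersetCard.mpr ⟨Finset.subset_univ _, hA⟩
        by_cases hd : Disjoint R (Finset.powersetCard r A)
        · refine ⟨f A, Finset.mem_union_right _
            (Finset.mem_image_of_mem f (Finset.mem_filter.mpr ⟨hAS, hd⟩)), ?_⟩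
          exact (hf A (by omega)).1
        · obtain ⟨e, heR, heEA⟩ := Finset.not_disjoint_iff.mp hd
          exact ⟨e, Finset.mem_union_left _ heR, (Finset.mem_powersetCard.mp heEA).1⟩
    have hHcard : H.card ≤ R.card + U R := by
      calc H.card ≤ R.card + ((S.filter (fun A => Disjoint R (Finset.powersetCard r A))).image f).card :=
            Finset.card_union_le _ _
        _ ≤ R.card + U R := by
            rw [hU_def]
            exact Nat.add_le_add_left (Finset.card_image_le) _
    have hle := turan_le H hT
    -- numeric part
    set N : ℝ := (n.choose r : ℝ) with hN_def
    set M : ℝ := (n.choose s : ℝ) with hM_def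
    set D : ℝ := ∑ i ∈ Finset.Icc r s, (s.choose i : ℝ) * ((n - s).choose (s - i) : ℝ)
      with hD_def
    have hD1 : (1 : ℝ) ≤ D := by
      have hmem : s ∈ Finset.Icc r s := by simp [hrs.le]
      have hterm : (s.choose s : ℝ) * ((n - s).choose (s - s) : ℝ) = 1 := by
        rw [Nat.sub_self, Nat.choose_self, Nat.choose_zero_right]
        norm_num
      calc (1:ℝ) = (s.choose s : ℝ) * ((n - s).choose (s - s) : ℝ) := hterm.symm
        _ ≤ D := Finset.single_le_sum (f := fun i => (s.choose i : ℝ) * ((n - s).choose (s - i) : ℝ))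
            (fun i _ => by positivity) hmem
    have hD0 : (0:ℝ) < D := by linarith
    have hMK : M * (k:ℝ) ≤ N * D := by
      have h := choose_nat_ineq n s r hsn hrs
      have h' : ((n.choose s * s.choose r : ℕ) : ℝ)
          ≤ ((n.choose r * ∑ i ∈ Finset.Icc r s, s.choose i * (n - s).choose (s - i) : ℕ) : ℝ) :=
        Nat.cast_le.mpr h
      push_cast at h'
      rw [hM_def, hN_def, hD_def, hk_def]
      exact h'
    have hN0 : (0:ℝ) ≤ N := by rw [hN_def]; positivity
    have hM0 : (0:ℝ) ≤ M := by rw [hM_def]; positivity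
    have hMain := LLL_numeric k L D N M hk2 hL2 hD1 hN0 hM0 hMK hLLL
    rw [← hq_def] at hMain
    -- put everything together
    calc (turanNum n s r : ℝ) ≤ (H.card : ℝ) := by exact_mod_cast hle
      _ ≤ ((R.card + U R : ℕ) : ℝ) := by exact_mod_cast hHcard
      _ ≤ B := hRle
      _ = N * q + M * (1 - q) ^ k := by
          rw [hB_def, hFcard, hScard, hN_def, hM_def]
      _ ≤ N / L := hMain
end

section
/- Let N ≥ s > r ≥ 2 and m ≥ 1 be integers, and let A be a Turán (N,s,r)-system on the vertex set [N]. On the vertex set [N] × [m] (of size mN), let B be the r-uniform hypergraph consisting of (a) all r-sets {(a₁,b₁),…,(a_r,b_r)} with distinct a₁,…,a_r such that {a₁,…,a_r} ∈ A, together with (b) all r-sets of [N] × [m] containing at least two vertices with the same first coordinate. Then B is a Turán (mN, s, r)-system and has at most m^r·|A| + N·C(m,2)·C(mN−2, r−2) edges; in particular T(mN, s, r) ≤ m^r·T(N,s,r) + N·C(m,2)·C(mN−2, r−2). -/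
open Finset

lemma blowup_isTuran (N s r m : ℕ) (hrs : r < s) (hr : 2 ≤ r)
    (A : Finset (Finset (Fin N))) (hA : IsTuranSystem s r A) :
    IsTuranSystem s r ((Finset.powersetCard r (Finset.univ : Finset (Fin N × Fin m))).filter
      (fun e => e.image Prod.fst ∈ A ∨ (e.image Prod.fst).card < r)) := by
  constructor
  · intro e he
    exact (Finset.mem_powersetCard.mp (Finset.mem_filter.mp he).1).2
  · intro S hS
    by_cases h : s ≤ (S.image Prod.fst).card
    · obtain ⟨P', hP'sub, hP'card⟩ := Finset.exists_subset_card_eq h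
      obtain ⟨a, haA, haP'⟩ := hA.2 P' hP'card
      have hacard : a.card = r := hA.1 a haA
      have hex : ∀ i ∈ a, ∃ p ∈ S, p.1 = i := by
        intro i hi
        have : i ∈ S.image Prod.fst := hP'sub (haP' hi)
        simpa [Finset.mem_image] using this
      choose f hfS hf1 using hex
      have hinj : Function.Injective (fun x : {i // i ∈ a} => f x.1 x.2) := by
        intro x y hxy
        have := congrArg Prod.fst hxy
        simp only [hf1] at this
        exact Subtype.ext this
      refine ⟨a.attach.image (fun x => f x.1 x.2), ?_, ?_⟩
      · rw [Finset.mem_filter, Finset.mem_powersetCard]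
        refine ⟨⟨Finset.subset_univ _, ?_⟩, Or.inl ?_⟩
        · rw [Finset.card_image_of_injective _ hinj, Finset.card_attach, hacard]
        · have : (a.attach.image (fun x => f x.1 x.2)).image Prod.fst = a := by
            rw [Finset.image_image]
            have : a.attach.image (Prod.fst ∘ fun x => f x.1 x.2)
                = a.attach.image Subtype.val := by
              apply Finset.image_congr
              intro x _
              exact hf1 x.1 x.2
            rw [this, Finset.attach_image_val]
          rw [this]; exact haA
      · intro p hp
        obtain ⟨x, _, rfl⟩ := Finset.mem_image.mp hp
        exact hfS x.1 x.2
    · push_neg at h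
      obtain ⟨p, hp, q, hq, hpq, hfst⟩ :=
        Finset.exists_ne_map_eq_of_card_lt_of_maps_to (hS ▸ h)
          (fun p hp => Finset.mem_image_of_mem Prod.fst hp)
      have hpqS : ({p, q} : Finset (Fin N × Fin m)) ⊆ S := by
        intro x hx; rcases Finset.mem_insert.mp hx with rfl | hx
        · exact hp
        · rw [Finset.mem_singleton.mp hx]; exact hq
      obtain ⟨e, hpe, heS, hecard⟩ := Finset.exists_subsuperset_card_eq (n := r) hpqS
        (by rw [Finset.card_pair hpq]; exact hr) (by rw [hS]; exact hrs.le)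
      refine ⟨e, ?_, heS⟩
      rw [Finset.mem_filter, Finset.mem_powersetCard]
      refine ⟨⟨Finset.subset_univ _, hecard⟩, Or.inr ?_⟩
      have hpe' : p ∈ e := hpe (Finset.mem_insert_self _ _)
      have hqe : q ∈ e := hpe (by simp)
      have hsub : e.image Prod.fst ⊆ (e.erase p).image Prod.fst := by
        intro i hi
        obtain ⟨x, hx, rfl⟩ := Finset.mem_image.mp hi
        by_cases hxp : x = p
        · subst hxp
          rw [hfst]
          exact Finset.mem_image_of_mem _ (Finset.mem_erase.mpr ⟨hpq.symm, hqe⟩)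
        · exact Finset.mem_image_of_mem _ (Finset.mem_erase.mpr ⟨hxp, hx⟩)
      calc (e.image Prod.fst).card ≤ ((e.erase p).image Prod.fst).card :=
            Finset.card_le_card hsub
        _ ≤ (e.erase p).card := Finset.card_image_le
        _ = r - 1 := by rw [Finset.card_erase_of_mem hpe', hecard]
        _ < r := by omega

lemma blowup_card (N s r m : ℕ) (hr : 2 ≤ r) (hm : 1 ≤ m)
    (A : Finset (Finset (Fin N))) (hA : IsTuranSystem s r A) :
    ((Finset.powersetCard r (Finset.univ : Finset (Fin N × Fin m))).filter
      (fun e => e.image Prod.fst ∈ A ∨ (e.image Prod.fst).card < r)).card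
      ≤ m ^ r * A.card + N * m.choose 2 * (m * N - 2).choose (r - 2) := by
  classical
  rw [Finset.filter_or]
  refine le_trans (Finset.card_union_le _ _) (Nat.add_le_add ?_ ?_)
  · -- good edges
    have hsub : (Finset.powersetCard r (Finset.univ : Finset (Fin N × Fin m))).filter
        (fun e => e.image Prod.fst ∈ A) ⊆
        A.biUnion (fun a => (Finset.powersetCard r (Finset.univ : Finset (Fin N × Fin m))).filter
          (fun e => e.image Prod.fst = a)) := by
      intro e he
      rw [Finset.mem_biUnion]
      exact ⟨e.image Prod.fst, (Finset.mem_filter.mp he).2,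
        Finset.mem_filter.mpr ⟨(Finset.mem_filter.mp he).1, rfl⟩⟩
    have hfib : ∀ a ∈ A,
        ((Finset.powersetCard r (Finset.univ : Finset (Fin N × Fin m))).filter
          (fun e => e.image Prod.fst = a)).card ≤ m ^ r := by
      intro a haA
      have hacard : a.card = r := hA.1 a haA
      set g : Finset (Fin N × Fin m) → (∀ i ∈ a, Fin m) :=
        fun e => fun i _ => if h : ∃ j : Fin m, (i, j) ∈ e then h.choose else ⟨0, hm⟩ with hg
      have key : ∀ e ∈ (Finset.powersetCard r (Finset.univ : Finset (Fin N × Fin m))).filter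
          (fun e => e.image Prod.fst = a),
          e = a.attach.image (fun x => (x.1, g e x.1 x.2)) := by
        intro e he
        rw [Finset.mem_filter, Finset.mem_powersetCard] at he
        obtain ⟨⟨-, hecard⟩, himg⟩ := he
        have hexj : ∀ x : {i // i ∈ a}, ∃ j : Fin m, (x.1, j) ∈ e := by
          intro x
          have : x.1 ∈ e.image Prod.fst := himg ▸ x.2
          obtain ⟨p, hp, hp1⟩ := Finset.mem_image.mp this
          exact ⟨p.2, by rw [← hp1]; simpa using hp⟩
        have hmem : ∀ x : {i // i ∈ a}, (x.1, g e x.1 x.2) ∈ e := by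
          intro x
          have h := hexj x
          simp only [hg, dif_pos h]
          exact h.choose_spec
        have hsub2 : a.attach.image (fun x => (x.1, g e x.1 x.2)) ⊆ e := by
          intro p hp
          obtain ⟨x, _, rfl⟩ := Finset.mem_image.mp hp
          exact hmem x
        have hinj : Function.Injective (fun x : {i // i ∈ a} => (x.1, g e x.1 x.2)) := by
          intro x y hxy
          exact Subtype.ext (congrArg Prod.fst hxy)
        have hcard2 : (a.attach.image (fun x => (x.1, g e x.1 x.2))).card = r := by
          rw [Finset.card_image_of_injective _ hinj, Finset.card_attach, hacard]
        exact (Finset.eq_of_subset_of_card_le hsub2 (by rw [hcard2, hecard])).symm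
      have hmaps : ∀ e ∈ (Finset.powersetCard r (Finset.univ : Finset (Fin N × Fin m))).filter
          (fun e => e.image Prod.fst = a), g e ∈ a.pi (fun _ => (Finset.univ : Finset (Fin m))) := by
        intro e _
        rw [Finset.mem_pi]
        intro i hi
        exact Finset.mem_univ _
      have hinj2 : Set.InjOn g ((Finset.powersetCard r
          (Finset.univ : Finset (Fin N × Fin m))).filter
          (fun e => e.image Prod.fst = a) : Finset _) := by
        intro e he e' he' hgeq
        rw [key e he, key e' he', hgeq]
      have := Finset.card_le_card_of_injOn g hmaps hinj2
      rwa [Finset.card_pi, Finset.prod_const, Finset.card_univ, Fintype.card_fin, hacard] at this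
    calc _ ≤ (A.biUnion (fun a => (Finset.powersetCard r
            (Finset.univ : Finset (Fin N × Fin m))).filter
            (fun e => e.image Prod.fst = a))).card := Finset.card_le_card hsub
      _ ≤ ∑ a ∈ A, ((Finset.powersetCard r (Finset.univ : Finset (Fin N × Fin m))).filter
            (fun e => e.image Prod.fst = a)).card := Finset.card_biUnion_le
      _ ≤ ∑ _a ∈ A, m ^ r := Finset.sum_le_sum hfib
      _ = m ^ r * A.card := by rw [Finset.sum_const, smul_eq_mul, mul_comm]
  · -- bad edges
    have hsub : (Finset.powersetCard r (Finset.univ : Finset (Fin N × Fin m))).filter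
        (fun e => (e.image Prod.fst).card < r) ⊆
        (Finset.univ : Finset (Fin N)).biUnion (fun i =>
          (Finset.powersetCard 2 (Finset.univ : Finset (Fin m))).biUnion (fun pb =>
            (Finset.powersetCard r (Finset.univ : Finset (Fin N × Fin m))).filter
              (fun e => pb.image (fun b => (i, b)) ⊆ e))) := by
      intro e he
      rw [Finset.mem_filter, Finset.mem_powersetCard] at he
      obtain ⟨⟨-, hecard⟩, himg⟩ := he
      have hlt : (e.image Prod.fst).card < e.card := by rw [hecard]; exact himg
      obtain ⟨p, hp, q, hq, hpq, hfst⟩ :=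
        Finset.exists_ne_map_eq_of_card_lt_of_maps_to hlt
          (fun p hp => Finset.mem_image_of_mem Prod.fst hp)
      have hsnd : p.2 ≠ q.2 := fun h2 => hpq (Prod.ext hfst h2)
      simp only [Finset.mem_biUnion]
      refine ⟨p.1, Finset.mem_univ _, {p.2, q.2}, ?_, ?_⟩
      · rw [Finset.mem_powersetCard]
        exact ⟨Finset.subset_univ _, Finset.card_pair hsnd⟩
      · rw [Finset.mem_filter, Finset.mem_powersetCard]
        refine ⟨⟨Finset.subset_univ _, hecard⟩, ?_⟩
        intro x hx
        simp only [Finset.image_insert, Finset.image_singleton, Finset.mem_insert,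
          Finset.mem_singleton] at hx
        rcases hx with rfl | rfl
        · simpa using hp
        · rw [hfst]; simpa using hq
    have hfib : ∀ i : Fin N, ∀ pb ∈ Finset.powersetCard 2 (Finset.univ : Finset (Fin m)),
        ((Finset.powersetCard r (Finset.univ : Finset (Fin N × Fin m))).filter
          (fun e => pb.image (fun b => (i, b)) ⊆ e)).card ≤ (m * N - 2).choose (r - 2) := by
      intro i pb hpb
      set P : Finset (Fin N × Fin m) := pb.image (fun b => (i, b)) with hP
      have hPcard : P.card = 2 := by
        rw [hP, Finset.card_image_of_injective _ (fun b b' h => by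
          simpa using h)]
        exact (Finset.mem_powersetCard.mp hpb).2
      have hmaps : ∀ e ∈ (Finset.powersetCard r
          (Finset.univ : Finset (Fin N × Fin m))).filter (fun e => P ⊆ e),
          e \ P ∈ Finset.powersetCard (r - 2) ((Finset.univ : Finset (Fin N × Fin m)) \ P) := by
        intro e he
        rw [Finset.mem_filter, Finset.mem_powersetCard] at he
        obtain ⟨⟨-, hecard⟩, hPe⟩ := he
        rw [Finset.mem_powersetCard]
        refine ⟨Finset.sdiff_subset_sdiff (Finset.subset_univ _) (Finset.Subset.refl _), ?_⟩
        rw [Finset.card_sdiff_of_subset hPe, hecard, hPcard]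
      have hinj : Set.InjOn (fun e => e \ P)
          (((Finset.powersetCard r (Finset.univ : Finset (Fin N × Fin m))).filter
            (fun e => P ⊆ e)) : Finset _) := by
        intro e he e' he' hd
        have hPe : P ⊆ e := (Finset.mem_filter.mp he).2
        have hPe' : P ⊆ e' := (Finset.mem_filter.mp he').2
        calc e = e \ P ∪ P := (Finset.sdiff_union_of_subset hPe).symm
          _ = e' \ P ∪ P := by rw [show e \ P = e' \ P from hd]
          _ = e' := Finset.sdiff_union_of_subset hPe'
      have := Finset.card_le_card_of_injOn (fun e => e \ P) hmaps hinj
      rwa [Finset.card_powersetCard, Finset.card_sdiff_of_subset (Finset.subset_univ _),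
        Finset.card_univ, Fintype.card_prod, Fintype.card_fin, Fintype.card_fin,
        hPcard, mul_comm N m] at this
    calc _ ≤ ((Finset.univ : Finset (Fin N)).biUnion (fun i =>
            (Finset.powersetCard 2 (Finset.univ : Finset (Fin m))).biUnion (fun pb =>
              (Finset.powersetCard r (Finset.univ : Finset (Fin N × Fin m))).filter
                (fun e => pb.image (fun b => (i, b)) ⊆ e)))).card := Finset.card_le_card hsub
      _ ≤ ∑ i ∈ (Finset.univ : Finset (Fin N)),
            ((Finset.powersetCard 2 (Finset.univ : Finset (Fin m))).biUnion (fun pb =>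
              (Finset.powersetCard r (Finset.univ : Finset (Fin N × Fin m))).filter
                (fun e => pb.image (fun b => (i, b)) ⊆ e))).card := Finset.card_biUnion_le
      _ ≤ ∑ i ∈ (Finset.univ : Finset (Fin N)),
            ∑ pb ∈ Finset.powersetCard 2 (Finset.univ : Finset (Fin m)),
              ((Finset.powersetCard r (Finset.univ : Finset (Fin N × Fin m))).filter
                (fun e => pb.image (fun b => (i, b)) ⊆ e)).card :=
            Finset.sum_le_sum (fun i _ => Finset.card_biUnion_le)
      _ ≤ ∑ _i ∈ (Finset.univ : Finset (Fin N)),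
            ∑ _pb ∈ Finset.powersetCard 2 (Finset.univ : Finset (Fin m)),
              (m * N - 2).choose (r - 2) :=
            Finset.sum_le_sum (fun i _ => Finset.sum_le_sum (fun pb hpb => hfib i pb hpb))
      _ = N * m.choose 2 * (m * N - 2).choose (r - 2) := by
            simp [Finset.sum_const, Finset.card_powersetCard, Finset.card_univ, mul_assoc]

lemma turan_transport {V W : Type*} [DecidableEq V] [DecidableEq W] (E : V ≃ W)
    {s r : ℕ} {H : Finset (Finset V)} (hH : IsTuranSystem s r H) :
    IsTuranSystem s r (H.image (Finset.image E)) ∧ (H.image (Finset.image E)).card = H.card := by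
  refine ⟨⟨?_, ?_⟩, ?_⟩
  · intro e he
    obtain ⟨e0, he0, rfl⟩ := Finset.mem_image.mp he
    rw [Finset.card_image_of_injective _ E.injective]
    exact hH.1 e0 he0
  · intro S hS
    obtain ⟨e, heH, heS⟩ := hH.2 (S.image E.symm)
      (by rw [Finset.card_image_of_injective _ E.symm.injective, hS])
    refine ⟨e.image E, Finset.mem_image_of_mem _ heH, ?_⟩
    intro x hx
    obtain ⟨y, hy, rfl⟩ := Finset.mem_image.mp hx
    obtain ⟨z, hz, hz2⟩ := Finset.mem_image.mp (heS hy)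
    rw [← hz2, Equiv.apply_symm_apply]
    exact hz
  · exact Finset.card_image_of_injective _ (Finset.image_injective E.injective)

lemma turan_exists (n s r : ℕ) (hrs : r ≤ s) :
    IsTuranSystem s r (Finset.powersetCard r (Finset.univ : Finset (Fin n))) := by
  constructor
  · intro e he
    exact (Finset.mem_powersetCard.mp he).2
  · intro S hS
    obtain ⟨e, heS, hecard⟩ := Finset.exists_subset_card_eq (n := r) (by rw [hS]; exact hrs)
    exact ⟨e, Finset.mem_powersetCard.mpr ⟨Finset.subset_univ _, hecard⟩, heS⟩

/-- Blow-up construction: given a Turán `(N,s,r)`-system `A` on `[N]`, the `r`-graph `B`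
on `[N] × [m]` consisting of (a) all `r`-sets with distinct first coordinates whose set of
first coordinates lies in `A`, together with (b) all `r`-sets containing two vertices with
the same first coordinate, is a Turán `(mN,s,r)`-system with at most
`m^r·|A| + N·C(m,2)·C(mN−2, r−2)` edges; in particular
`T(mN,s,r) ≤ m^r·T(N,s,r) + N·C(m,2)·C(mN−2, r−2)`. -/
theorem blowup_turan (N s r m : ℕ) (hsN : s ≤ N) (hrs : r < s) (hr : 2 ≤ r)
    (hm : 1 ≤ m) (A : Finset (Finset (Fin N))) (hA : IsTuranSystem s r A)
    (B : Finset (Finset (Fin N × Fin m)))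
    (hB : B = (Finset.powersetCard r (Finset.univ : Finset (Fin N × Fin m))).filter
      (fun e => e.image Prod.fst ∈ A ∨ (e.image Prod.fst).card < r)) :
    IsTuranSystem s r B ∧
    B.card ≤ m ^ r * A.card + N * m.choose 2 * (m * N - 2).choose (r - 2) ∧
    turanNum (m * N) s r ≤ m ^ r * turanNum N s r
      + N * m.choose 2 * (m * N - 2).choose (r - 2) := by
  subst hB
  refine ⟨blowup_isTuran N s r m hrs hr A hA, blowup_card N s r m hr hm A hA, ?_⟩
  have hmem : turanNum N s r ∈
      {k | ∃ H : Finset (Finset (Fin N)), IsTuranSystem s r H ∧ H.card = k} :=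
    Nat.sInf_mem ⟨_, _, turan_exists N s r hrs.le, rfl⟩
  obtain ⟨A0, hA0, hA0card⟩ := hmem
  have hT0 := blowup_isTuran N s r m hrs hr A0 hA0
  have hC0 := blowup_card N s r m hr hm A0 hA0
  set E : Fin N × Fin m ≃ Fin (m * N) := (Equiv.prodComm _ _).trans finProdFinEquiv with hE
  obtain ⟨hT1, hC1⟩ := turan_transport E hT0
  have hle : turanNum (m * N) s r ≤
      ((((Finset.powersetCard r (Finset.univ : Finset (Fin N × Fin m))).filter
        (fun e => e.image Prod.fst ∈ A0 ∨ (e.image Prod.fst).card < r)).image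
          (Finset.image E))).card :=
    Nat.sInf_le ⟨_, hT1, rfl⟩
  rw [hC1] at hle
  rw [hA0card] at hC0
  exact le_trans hle hC0
end

section
/- Let s and R be integers with 3 ≤ R ≤ s/2, set r := s − R, and let N be an integer with N ≥ C(s,3). Then for every integer i with r ≤ i ≤ s−1, the ratio of consecutive terms satisfies ( C(s,i+1)·C(N−s, s−i−1) ) / ( C(s,i)·C(N−s, s−i) ) = (s−i)² / ( (i+1)·(N−2s+i+1) ) ≤ 1/2. -/
lemma choose3_lb (s : ℕ) (h : 6 ≤ s) : 3 * s ≤ s.choose 3 := by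
  induction s with
  | zero => omega
  | succ n ih =>
    rcases Nat.lt_or_ge n 6 with h6 | h6
    · have hn : n = 5 := by omega
      subst hn; decide
    · have h2 : 15 ≤ n.choose 2 := by
        calc (15:ℕ) = (6:ℕ).choose 2 := by decide
        _ ≤ n.choose 2 := Nat.choose_le_choose 2 h6
      have := ih h6
      have h3 : (n+1).choose 3 = n.choose 2 + n.choose 3 := Nat.choose_succ_succ n 2
      omega

set_option maxHeartbeats 1000000 in
/-- For integers `3 ≤ R ≤ s/2`, `r := s − R`, `N ≥ C(s,3)`, and `r ≤ i ≤ s−1`: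
`(C(s,i+1)·C(N−s, s−i−1)) / (C(s,i)·C(N−s, s−i)) = (s−i)² / ((i+1)·(N−2s+i+1)) ≤ 1/2`. -/
theorem consecutive_ratio (s R N i : ℕ) (hR3 : 3 ≤ R) (hRs : 2 * R ≤ s)
    (hN : s.choose 3 ≤ N) (hi1 : s - R ≤ i) (hi2 : i ≤ s - 1) :
    ((s.choose (i + 1) : ℝ) * ((N - s).choose (s - i - 1) : ℝ)) /
        ((s.choose i : ℝ) * ((N - s).choose (s - i) : ℝ))
      = ((s : ℝ) - i) ^ 2 / (((i : ℝ) + 1) * ((N : ℝ) - 2 * s + i + 1)) ∧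
    ((s.choose (i + 1) : ℝ) * ((N - s).choose (s - i - 1) : ℝ)) /
        ((s.choose i : ℝ) * ((N - s).choose (s - i) : ℝ)) ≤ 1 / 2 := by
  have hs6 : 6 ≤ s := by omega
  have hNs : 3 * s ≤ N := le_trans (choose3_lb s hs6) hN
  have hilt : i < s := by omega
  have hsiR : s - i ≤ R := by omega
  -- key nat identities
  have h1 : s.choose (i+1) * (i+1) = s.choose i * (s - i) := Nat.choose_succ_right_eq s i
  have hsi1 : s - i - 1 + 1 = s - i := by omega
  have h2 : (N-s).choose (s-i) * (s-i) = (N-s).choose (s-i-1) * (N - s - (s - i - 1)) := by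
    have := Nat.choose_succ_right_eq (N-s) (s-i-1)
    rwa [hsi1] at this
  set D : ℕ := N - s - (s - i - 1) with hD
  have hDval : D + 2 * s = N + i + 1 := by omega
  -- positivity
  have ha : 0 < s.choose i := Nat.choose_pos (le_of_lt hilt)
  have hc : 0 < (N-s).choose (s-i) := Nat.choose_pos (by omega)
  -- real casts
  have hxcast : ((s - i : ℕ) : ℝ) = (s:ℝ) - i := by
    push_cast [Nat.cast_sub (le_of_lt hilt)]; ring
  have hDcast : ((D : ℕ) : ℝ) = (N:ℝ) - 2*s + i + 1 := by
    have : ((D + 2*s : ℕ) : ℝ) = ((N + i + 1 : ℕ) : ℝ) := by rw [hDval]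
    push_cast at this; linarith
  have h1R : (s.choose (i+1) : ℝ) * ((i:ℝ)+1) = (s.choose i : ℝ) * ((s:ℝ) - i) := by
    have := congrArg (fun n : ℕ => (n:ℝ)) h1
    push_cast at this; rw [← hxcast]; push_cast; linarith
  have h2R : ((N-s).choose (s-i) : ℝ) * ((s:ℝ) - i)
      = ((N-s).choose (s-i-1) : ℝ) * ((N:ℝ) - 2*s + i + 1) := by
    have := congrArg (fun n : ℕ => (n:ℝ)) h2
    push_cast at this
    rw [← hxcast, ← hDcast]; push_cast; linarith
  have haR : (0:ℝ) < (s.choose i : ℝ) := by exact_mod_cast ha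
  have hcR : (0:ℝ) < ((N-s).choose (s-i) : ℝ) := by exact_mod_cast hc
  have hi1R : (0:ℝ) < (i:ℝ) + 1 := by positivity
  have hDR : (0:ℝ) < (N:ℝ) - 2*s + i + 1 := by
    rw [← hDcast]; have : 0 < D := by omega
    exact_mod_cast this
  have heq : ((s.choose (i + 1) : ℝ) * ((N - s).choose (s - i - 1) : ℝ)) /
        ((s.choose i : ℝ) * ((N - s).choose (s - i) : ℝ))
      = ((s : ℝ) - i) ^ 2 / (((i : ℝ) + 1) * ((N : ℝ) - 2 * s + i + 1)) := by
    rw [div_eq_div_iff (by positivity) (by positivity)]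
    linear_combination (((N-s).choose (s-i-1) : ℝ) * ((N:ℝ) - 2*s + i + 1)) * h1R
      - ((s.choose i : ℝ) * ((s:ℝ) - i)) * h2R
  refine ⟨heq, ?_⟩
  rw [heq, div_le_div_iff₀ (by positivity) (by norm_num)]
  -- 2*(s-i)^2 ≤ (i+1)*(N-2s+i+1)
  have hx1 : (s:ℝ) - i ≤ (R:ℝ) := by
    rw [← hxcast]; exact_mod_cast hsiR
  have hx2 : (s:ℝ) - (R:ℝ) ≤ (i:ℝ) := by
    have : s ≤ i + R := by omega
    have := (Nat.cast_le (α := ℝ)).mpr this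
    push_cast at this; linarith
  have hRsR : 2 * (R:ℝ) ≤ (s:ℝ) := by exact_mod_cast hRs
  have hR3R : (3:ℝ) ≤ (R:ℝ) := by exact_mod_cast hR3
  have hNR : 3 * (s:ℝ) ≤ (N:ℝ) := by exact_mod_cast hNs
  have hx0 : (0:ℝ) ≤ (s:ℝ) - i := by
    rw [← hxcast]; positivity
  have hf1 : (R:ℝ) + 1 ≤ (i:ℝ) + 1 := by linarith
  have hf2 : 3*(R:ℝ) + 1 ≤ (N:ℝ) - 2*s + i + 1 := by linarith
  have key : ((R:ℝ)+1)*(3*(R:ℝ)+1) ≤ ((i:ℝ)+1)*((N:ℝ)-2*s+i+1) :=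
    mul_le_mul hf1 hf2 (by positivity) (by linarith)
  nlinarith [key, mul_self_le_mul_self hx0 hx1]
end

section
/- Let r, R ≥ 1 be integers, let k be an integer with R ≤ k ≤ r−1, and let n ≥ r+R be an integer. Let S be an arbitrary family of (k−R)-element subsets of [n] = {1,…,n}. Define S* to be the family of all r-element subsets {x₁ < x₂ < … < x_r} of [n] whose k−R smallest elements {x₁,…,x_{k−R}} form a set in S. Define T to be the family of all k-element subsets Y of [n] such that no (k−R)-element subset of Y belongs to S. For each y ∈ [n], let F_y be a Turán (n−y, r−k+R, r−k)-system on the vertex set {y+1,…,n}. Define T* := ⋃_{Y ∈ T} { Y ∪ Z : Z ∈ F_{max Y} }. Then S* ∪ T* is a Turán (n, r+R, r)-system on [n]. -/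
open Finset

lemma exists_bottom {α : Type*} [LinearOrder α] (A : Finset α) (m : ℕ) (hm : m ≤ A.card) :
    ∃ Y : Finset α, Y ⊆ A ∧ Y.card = m ∧ ∀ a ∈ Y, ∀ b ∈ A, b ∉ Y → a < b := by
  classical
  set l := A.sort (· ≤ ·) with hl
  have hnd : l.Nodup := A.sort_nodup _
  have hsorted : l.Pairwise (· ≤ ·) := A.pairwise_sort _
  refine ⟨(l.take m).toFinset, ?_, ?_, ?_⟩
  · intro x hx
    rw [List.mem_toFinset] at hx
    have := List.mem_of_mem_take hx
    rwa [Finset.mem_sort] at this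
  · rw [List.toFinset_card_of_nodup (hnd.sublist (List.take_sublist _ _))]
    rw [List.length_take, Finset.length_sort]
    omega
  · intro a ha b hb hbY
    rw [List.mem_toFinset] at ha hbY
    have hbl : b ∈ l := by rwa [Finset.mem_sort]
    have hbd : b ∈ l.drop m := by
      have h : b ∈ l.take m ++ l.drop m := by rwa [List.take_append_drop]
      rw [List.mem_append] at h
      tauto
    have hle : a ≤ b := hsorted.rel_of_mem_take_of_mem_drop ha hbd
    exact lt_of_le_of_ne hle (fun h => hbY (h ▸ ha))

/-- The construction from the recursion lemma: given an arbitrary family `S` of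
`(k−R)`-subsets of `[n]`, let `S*` be all `r`-subsets whose `k−R` smallest elements form
a set in `S`, let `T` be all `k`-subsets not containing a member of `S` as a
`(k−R)`-subset, and for each `y` let `F y` be a Turán `(n−y, r−k+R, r−k)`-system on the
vertices greater than `y`. Then `S* ∪ T*`, where
`T* = ⋃_{Y ∈ T} { Y ∪ Z : Z ∈ F (max Y) }`, is a Turán `(n, r+R, r)`-system on `[n]`. -/
theorem union_is_turan_system (n r R k : ℕ) (hr : 1 ≤ r) (hR : 1 ≤ R)
    (hRk : R ≤ k) (hkr : k ≤ r - 1) (hn : r + R ≤ n)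
    (S : Set (Finset (Fin n))) (hS : ∀ f ∈ S, f.card = k - R)
    (F : Fin n → Set (Finset (Fin n)))
    (hF1 : ∀ y : Fin n, ∀ e ∈ F y, e.card = r - k ∧ ∀ v ∈ e, y < v)
    (hF2 : ∀ y : Fin n, ∀ W : Finset (Fin n), (∀ v ∈ W, y < v) →
      W.card = r - k + R → ∃ e ∈ F y, e ⊆ W)
    (Sstar : Set (Finset (Fin n)))
    (hSstar : Sstar = {e | e.card = r ∧
      ∃ f ∈ S, f ⊆ e ∧ ∀ a ∈ f, ∀ b ∈ e, b ∉ f → a < b})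
    (T : Set (Finset (Fin n)))
    (hT : T = {Y | Y.card = k ∧ ∀ f : Finset (Fin n), f ⊆ Y → f.card = k - R → f ∉ S})
    (Tstar : Set (Finset (Fin n)))
    (hTstar : Tstar = {e | ∃ Y ∈ T, ∃ hY : Y.Nonempty,
      ∃ Z ∈ F (Y.max' hY), e = Y ∪ Z}) :
    (∀ e ∈ Sstar ∪ Tstar, e.card = r) ∧
    ∀ A : Finset (Fin n), A.card = r + R → ∃ e ∈ Sstar ∪ Tstar, e ⊆ A := by
  subst hSstar hT hTstar
  have hkr' : k < r := by omega
  have harith1 : k - R + (r + R - k) = r := by omega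
  have harith2 : k + (r - k) = r := by omega
  have harith3 : r + R - k = r - k + R := by omega
  constructor
  · rintro e (he | he)
    · exact he.1
    · obtain ⟨Y, hY, hYne, Z, hZ, rfl⟩ := he
      have hYcard : Y.card = k := hY.1
      have hZprop := hF1 _ _ hZ
      have hdisj : Disjoint Y Z := by
        rw [Finset.disjoint_right]
        intro v hvZ hvY
        exact absurd (Finset.le_max' Y v hvY) (not_le.mpr (hZprop.2 v hvZ))
      rw [Finset.card_union_of_disjoint hdisj, hYcard, hZprop.1]
      exact harith2
  · intro A hA
    obtain ⟨Y, hYA, hYcard, hbot⟩ := exists_bottom A k (by rw [hA]; omega)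
    have hAY : (A \ Y).card = r + R - k := by
      rw [Finset.card_sdiff_of_subset hYA, hA, hYcard]
    by_cases hYT : (Y.card = k ∧ ∀ f : Finset (Fin n), f ⊆ Y → f.card = k - R → f ∉ S)
    · have hYne : Y.Nonempty := Finset.card_pos.mp (by omega)
      have hW : ∀ v ∈ A \ Y, Y.max' hYne < v := by
        intro v hv
        rw [Finset.mem_sdiff] at hv
        exact hbot _ (Y.max'_mem hYne) v hv.1 hv.2
      obtain ⟨e, heF, heW⟩ := hF2 (Y.max' hYne) (A \ Y) hW (by rw [hAY]; exact harith3)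
      refine ⟨Y ∪ e, Or.inr ⟨Y, hYT, hYne, e, heF, rfl⟩, ?_⟩
      exact Finset.union_subset hYA (heW.trans Finset.sdiff_subset)
    · push_neg at hYT
      obtain ⟨f, hfY, hfcard, hfS⟩ := hYT hYcard
      have hd : Disjoint f (A \ Y) := by
        rw [Finset.disjoint_right]
        intro b hb
        rw [Finset.mem_sdiff] at hb
        exact fun hbf => hb.2 (hfY hbf)
      have hcard : (f ∪ (A \ Y)).card = r := by
        rw [Finset.card_union_of_disjoint hd, hfcard, hAY]
        exact harith1
      refine ⟨f ∪ (A \ Y), Or.inl ⟨hcard, f, hfS, Finset.subset_union_left, ?_⟩, ?_⟩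
      · intro a haf b hb hbf
        rcases Finset.mem_union.mp hb with h | h
        · exact absurd h hbf
        · rw [Finset.mem_sdiff] at h
          exact hbot a (hfY haf) b h.1 h.2
      · exact Finset.union_subset (hfY.trans hYA) Finset.sdiff_subset
end
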